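/- arXiv:1601.01271 — 7 statements merged into one kernel-verified Lean document; each statement's English description precedes it below -/
import Mathlib

section
/- Let g : ℝⁿ → ℝⁿ be continuous and consider the discrete-time system x⁺ = g(x). Suppose: (i) Mₑ ⊆ ℝⁿ is closed and forward invariant (g(Mₑ) ⊆ Mₑ); (ii) Mᵢ ⊆ Mₑ is closed, stable relative to Mₑ, and globally attractive relative to Mₑ; (iii) M∘ ⊆ Mᵢ is compact, stable relative to Mᵢ, and globally attractive relative to Mᵢ. Then M∘ is asymptotically stable relative to Mₑ: M∘ is stable relative to Mₑ, and there exists δ > 0 such that every x ∈ Mₑ with dist(x, M∘) < δ satisfies dist(g^[n](x), M∘) → 0 as n → ∞. -/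
open Metric Filter Topology

/-- `X` is stable relative to `Y` for the discrete-time system `x⁺ = g x`. -/
def StableRel {d : ℕ} (g : EuclideanSpace ℝ (Fin d) → EuclideanSpace ℝ (Fin d))
    (Y X : Set (EuclideanSpace ℝ (Fin d))) : Prop :=
  ∀ ε > (0 : ℝ), ∀ Δ > (0 : ℝ), ∃ δ > (0 : ℝ), ∀ x ∈ Y,
    infDist x X < δ → ‖x‖ < Δ → ∀ n : ℕ, infDist (g^[n] x) X < ε

/-- `X` is globally attractive relative to `Y` for the discrete-time system `x⁺ = g x`. -/
def GloballyAttractiveRel {d : ℕ}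
    (g : EuclideanSpace ℝ (Fin d) → EuclideanSpace ℝ (Fin d))
    (Y X : Set (EuclideanSpace ℝ (Fin d))) : Prop :=
  ∀ x ∈ Y, Tendsto (fun n : ℕ => infDist (g^[n] x) X) atTop (𝓝 0)

section HierAux

variable {d : ℕ}

/-- Iterates stay in a forward invariant set. -/
lemma iter_mem {g : EuclideanSpace ℝ (Fin d) → EuclideanSpace ℝ (Fin d)} {Y : Set (EuclideanSpace ℝ (Fin d))}
    (hY : g '' Y ⊆ Y) : ∀ n : ℕ, ∀ x ∈ Y, g^[n] x ∈ Y := by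
  intro n
  induction n with
  | zero => intro x hx; simpa using hx
  | succ n ih =>
      intro x hx
      rw [Function.iterate_succ_apply]
      exact ih _ (hY ⟨x, hx, rfl⟩)

/-- A closed set that is stable relative to a superset is forward invariant. -/
lemma iter_mem_of_stable {g : EuclideanSpace ℝ (Fin d) → EuclideanSpace ℝ (Fin d)}
    {Y X : Set (EuclideanSpace ℝ (Fin d))} (hXY : X ⊆ Y) (hXcl : IsClosed X)
    (hstab : StableRel g Y X) : ∀ x ∈ X, ∀ n : ℕ, g^[n] x ∈ X := by
  intro x hx n
  have hne : X.Nonempty := ⟨x, hx⟩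
  have h0 : infDist (g^[n] x) X ≤ 0 := by
    by_contra h
    push_neg at h
    obtain ⟨δ, hδpos, hδ⟩ := hstab _ h (‖x‖ + 1) (by positivity)
    have := hδ x (hXY hx) (by simpa [infDist_zero_of_mem hx] using hδpos) (lt_add_one _) n
    exact absurd this (lt_irrefl _)
  exact (hXcl.mem_iff_infDist_zero hne).2 (le_antisymm h0 infDist_nonneg)

/-- Uniform one-step continuity near a compact invariant set. -/
lemma onestep {g : EuclideanSpace ℝ (Fin d) → EuclideanSpace ℝ (Fin d)} (hg : Continuous g)
    {X : Set (EuclideanSpace ℝ (Fin d))} (hX : IsCompact X) (hne : X.Nonempty)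
    (hinv : ∀ p ∈ X, g p ∈ X) {r : ℝ} (hr : 0 < r) :
    ∃ δ > (0 : ℝ), ∀ z, infDist z X < δ → infDist (g z) X < r := by
  have hVopen : IsOpen {z | infDist (g z) X < r} :=
    isOpen_lt ((continuous_infDist_pt X).comp hg) continuous_const
  have hXV : X ⊆ {z | infDist (g z) X < r} := fun p hp => by
    simpa [infDist_zero_of_mem (hinv p hp)] using hr
  obtain ⟨δ, hδpos, hδ⟩ := hX.exists_thickening_subset_open hVopen hXV
  refine ⟨δ, hδpos, fun z hz => ?_⟩
  exact hδ ((mem_thickening_iff_infDist_lt hne).2 hz)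

/-- Uniform finite-horizon bound near a compact invariant set. -/
lemma finhor {g : EuclideanSpace ℝ (Fin d) → EuclideanSpace ℝ (Fin d)} (hg : Continuous g)
    {X : Set (EuclideanSpace ℝ (Fin d))} (hX : IsCompact X) (hne : X.Nonempty)
    (hinv : ∀ p ∈ X, g p ∈ X) {r : ℝ} (hr : 0 < r) (B : ℕ) :
    ∃ δ > (0 : ℝ), ∀ z, infDist z X < δ → ∀ j ≤ B, infDist (g^[j] z) X < r := by
  induction B with
  | zero =>
      refine ⟨r, hr, fun z hz j hj => ?_⟩
      interval_cases j
      simpa using hz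
  | succ B ih =>
      obtain ⟨δB, hδBpos, hB⟩ := ih
      obtain ⟨δ', hδ'pos, h1⟩ := onestep hg hX hne hinv hδBpos
      refine ⟨min δ' r, lt_min hδ'pos hr, fun z hz j hj => ?_⟩
      cases j with
      | zero => simpa using lt_of_lt_of_le hz (min_le_right _ _)
      | succ j =>
          rw [Function.iterate_succ_apply]
          exact hB _ (h1 z (lt_of_lt_of_le hz (min_le_left _ _))) j (Nat.succ_le_succ_iff.mp hj)

/-- Uniform attraction to a compact asymptotically stable set on compact subsets. -/
lemma ua {g : EuclideanSpace ℝ (Fin d) → EuclideanSpace ℝ (Fin d)} (hg : Continuous g)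
    {X Y : Set (EuclideanSpace ℝ (Fin d))} (hX : IsCompact X) (hne : X.Nonempty)
    (hYinv : g '' Y ⊆ Y) (hstab : StableRel g Y X) (hattr : GloballyAttractiveRel g Y X)
    {K : Set (EuclideanSpace ℝ (Fin d))} (hK : IsCompact K) (hKY : K ⊆ Y) {η : ℝ} (hη : 0 < η) :
    ∃ N : ℕ, ∀ x ∈ K, ∀ n ≥ N, infDist (g^[n] x) X < η := by
  classical
  obtain ⟨R, hR⟩ := hX.isBounded.subset_closedBall 0
  have hR0 : 0 ≤ R := by
    obtain ⟨p, hp⟩ := hne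
    have := hR hp
    have hpn : ‖p‖ ≤ R := by simpa [mem_closedBall, dist_zero_right] using this
    linarith [norm_nonneg p]
  have hnormle : ∀ z, infDist z X ≤ 1 → ‖z‖ < R + 2 := by
    intro z hz
    obtain ⟨p, hp, hdp⟩ := (infDist_lt_iff hne).1 (lt_of_le_of_lt hz one_lt_two)
    have hpn : ‖p‖ ≤ R := by simpa [mem_closedBall, dist_zero_right] using hR hp
    have : ‖z‖ ≤ ‖z - p‖ + ‖p‖ := by
      calc ‖z‖ = ‖(z - p) + p‖ := by rw [sub_add_cancel]
      _ ≤ ‖z - p‖ + ‖p‖ := norm_add_le _ _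
    rw [← dist_eq_norm] at this
    linarith
  obtain ⟨δ, hδpos, hδ⟩ := hstab η hη (R + 2) (by linarith)
  set δ' := min δ 1 with hδ'def
  have hδ'pos : 0 < δ' := lt_min hδpos one_pos
  have hNex : ∀ w : EuclideanSpace ℝ (Fin d), ∃ N : ℕ, w ∈ K → infDist (g^[N] w) X < δ' / 2 := by
    intro w
    by_cases hw : w ∈ K
    · obtain ⟨N, hN⟩ := ((hattr w (hKY hw)).eventually_lt_const (show (0:ℝ) < δ' / 2 by positivity)).exists
      exact ⟨N, fun _ => hN⟩
    · exact ⟨0, fun h => absurd h hw⟩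
  choose N hN using hNex
  set U : EuclideanSpace ℝ (Fin d) → Set (EuclideanSpace ℝ (Fin d)) :=
    fun w => {u | infDist (g^[N w] u) X < δ'} with hUdef
  have hUnhds : ∀ w ∈ K, U w ∈ 𝓝 w := by
    intro w hw
    have hop : IsOpen (U w) :=
      isOpen_lt ((continuous_infDist_pt X).comp (hg.iterate (N w))) continuous_const
    exact hop.mem_nhds (lt_trans (hN w hw) (half_lt_self hδ'pos))
  obtain ⟨t, htK, hcov⟩ := hK.elim_nhds_subcover U hUnhds
  refine ⟨t.sup N, fun x hx n hn => ?_⟩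
  obtain ⟨w, hwt, hxU⟩ := Set.mem_iUnion₂.mp (hcov hx)
  have h1 : infDist (g^[N w] x) X < δ' := hxU
  have h2 : ‖g^[N w] x‖ < R + 2 := hnormle _ (le_of_lt (lt_of_lt_of_le h1 (min_le_right _ _)))
  have h3 : g^[N w] x ∈ Y := iter_mem hYinv _ x (hKY hx)
  have h5 : N w ≤ n := le_trans (Finset.le_sup hwt) hn
  have h4 := hδ _ h3 (lt_of_lt_of_le h1 (min_le_left _ _)) h2 (n - N w)
  rwa [← Function.iterate_add_apply, Nat.sub_add_cancel h5] at h4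

end HierAux

theorem hierarchical_asymptotic_stability_discrete {d : ℕ}
    (g : EuclideanSpace ℝ (Fin d) → EuclideanSpace ℝ (Fin d)) (hg : Continuous g)
    (Me Mi Mo : Set (EuclideanSpace ℝ (Fin d)))
    (hMeClosed : IsClosed Me) (hMeInv : g '' Me ⊆ Me)
    (hMiSub : Mi ⊆ Me) (hMiClosed : IsClosed Mi)
    (hMiStable : StableRel g Me Mi) (hMiAttr : GloballyAttractiveRel g Me Mi)
    (hMoSub : Mo ⊆ Mi) (hMoCompact : IsCompact Mo)
    (hMoStable : StableRel g Mi Mo) (hMoAttr : GloballyAttractiveRel g Mi Mo) :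
    StableRel g Me Mo ∧
      ∃ δ > (0 : ℝ), ∀ x ∈ Me, infDist x Mo < δ →
        Tendsto (fun n : ℕ => infDist (g^[n] x) Mo) atTop (𝓝 0) := by
  classical
  rcases Mo.eq_empty_or_nonempty with hMoE | hMoNe
  · subst hMoE
    constructor
    · intro ε hε Δ hΔ
      exact ⟨1, one_pos, fun x _ _ _ n => by simpa [infDist_empty] using hε⟩
    · refine ⟨1, one_pos, fun x _ _ => ?_⟩
      simp only [infDist_empty]
      exact tendsto_const_nhds
  have hMiNe : Mi.Nonempty := hMoNe.mono hMoSub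
  have hMiIter : ∀ x ∈ Mi, ∀ n : ℕ, g^[n] x ∈ Mi := iter_mem_of_stable hMiSub hMiClosed hMiStable
  have hMoIter : ∀ x ∈ Mo, ∀ n : ℕ, g^[n] x ∈ Mo :=
    iter_mem_of_stable hMoSub hMoCompact.isClosed hMoStable
  have hMoInv1 : ∀ p ∈ Mo, g p ∈ Mo := fun p hp => by simpa using hMoIter p hp 1
  have hMiInv : g '' Mi ⊆ Mi := by
    rintro y ⟨z, hz, rfl⟩
    simpa using hMiIter z hz 1
  have hMeIter : ∀ x ∈ Me, ∀ n : ℕ, g^[n] x ∈ Me := fun x hx n => iter_mem hMeInv n x hx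
  -- norm bound near Mo
  obtain ⟨R, hR⟩ := hMoCompact.isBounded.subset_closedBall 0
  have hR0 : 0 ≤ R := by
    obtain ⟨p, hp⟩ := hMoNe
    have hpn : ‖p‖ ≤ R := by simpa [mem_closedBall, dist_zero_right] using hR hp
    linarith [norm_nonneg p]
  have hnormle : ∀ z, infDist z Mo ≤ 1 → ‖z‖ < R + 2 := by
    intro z hz
    obtain ⟨p, hp, hdp⟩ := (infDist_lt_iff hMoNe).1 (lt_of_le_of_lt hz one_lt_two)
    have hpn : ‖p‖ ≤ R := by simpa [mem_closedBall, dist_zero_right] using hR hp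
    have : ‖z‖ ≤ ‖z - p‖ + ‖p‖ := by
      calc ‖z‖ = ‖(z - p) + p‖ := by rw [sub_add_cancel]
      _ ≤ ‖z - p‖ + ‖p‖ := norm_add_le _ _
    rw [← dist_eq_norm] at this
    linarith
  set K1 : Set (EuclideanSpace ℝ (Fin d)) := {z | infDist z Mo ≤ 1} with hK1def
  have hK1closed : IsClosed K1 := isClosed_le (continuous_infDist_pt Mo) continuous_const
  have hK1cpt : IsCompact K1 := by
    refine isCompact_of_isClosed_isBounded hK1closed ?_
    refine (Metric.isBounded_closedBall (x := (0 : EuclideanSpace ℝ (Fin d))) (r := R + 2)).subset ?_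
    intro z hz
    simpa [mem_closedBall, dist_zero_right] using (hnormle z hz).le
  -- Part 1: stability of Mo relative to Me
  have hStab : StableRel g Me Mo := by
    intro ε hε Δ hΔ
    suffices hS : ∃ δ > (0:ℝ), ∀ x ∈ Me, infDist x Mo < δ → ‖x‖ < Δ →
        ∀ n : ℕ, infDist (g^[n] x) Mo < min ε 1 by
      obtain ⟨δ, hδpos, hδ⟩ := hS
      exact ⟨δ, hδpos, fun x hx h1 h2 n => lt_of_lt_of_le (hδ x hx h1 h2 n) (min_le_left _ _)⟩
    set ε' := min ε 1 with hε'def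
    have hε' : 0 < ε' := lt_min hε one_pos
    by_contra hcon
    push_neg at hcon
    have hseq : ∀ k : ℕ, ∃ z, z ∈ Me ∧ infDist z Mo < 1 / (k + 1) ∧ ‖z‖ < Δ ∧
        ∃ n : ℕ, ε' ≤ infDist (g^[n] z) Mo := by
      intro k
      obtain ⟨z, hz1, hz2, hz3, n, hz4⟩ := hcon (1 / (k + 1)) (by positivity)
      exact ⟨z, hz1, hz2, hz3, n, hz4⟩
    choose x hxMe hxd hxΔ hxn using hseq
    have hex : ∀ k : ℕ, ∃ n : ℕ, ε' ≤ infDist (g^[n] (x k)) Mo := hxn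
    set m : ℕ → ℕ := fun k => Nat.find (hex k) with hmdef
    have hm1 : ∀ k, ε' ≤ infDist (g^[m k] (x k)) Mo := fun k => Nat.find_spec (hex k)
    have hm2 : ∀ k, ∀ j < m k, infDist (g^[j] (x k)) Mo < ε' :=
      fun k j hj => not_le.mp (Nat.find_min (hex k) hj)
    have hxd0 : Tendsto (fun k => infDist (x k) Mo) atTop (𝓝 0) := by
      refine squeeze_zero (fun k => infDist_nonneg) (fun k => (hxd k).le)
        tendsto_one_div_add_atTop_nhds_zero_nat
    -- uniform attraction time on K1 ∩ Mi
    obtain ⟨N, hNua⟩ := ua hg hMoCompact hMoNe hMiInv hMoStable hMoAttr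
      (hK1cpt.inter_right hMiClosed) Set.inter_subset_right (half_pos hε')
    -- finite horizon bound for B = N + 1
    obtain ⟨δB, hδBpos, hδB⟩ := finhor hg hMoCompact hMoNe hMoInv1 hε' (N + 1)
    have hmgt : ∀ᶠ k in atTop, N + 1 < m k ∧ infDist (x k) Mo < ε' := by
      have h1 := hxd0.eventually_lt_const hδBpos
      have h2 := hxd0.eventually_lt_const hε'
      filter_upwards [h1, h2] with k hk1 hk2
      refine ⟨?_, hk2⟩
      by_contra hle
      push_neg at hle
      exact absurd (hδB (x k) hk1 (m k) hle) (not_lt.mpr (hm1 k))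
    obtain ⟨k₀, hk₀⟩ := eventually_atTop.mp hmgt
    set u : ℕ → EuclideanSpace ℝ (Fin d) :=
      fun j => g^[m (k₀ + j) - (N + 1)] (x (k₀ + j)) with hudef
    have huMem : ∀ j, u j ∈ K1 ∩ Me := by
      intro j
      have hk := hk₀ (k₀ + j) (Nat.le_add_right _ _)
      constructor
      · have : infDist (u j) Mo < ε' :=
          hm2 _ _ (Nat.sub_lt (by omega) (Nat.succ_pos N))
        exact le_of_lt (lt_of_lt_of_le this (min_le_right _ _))
      · exact hMeIter _ (hxMe _) _
    obtain ⟨v, hvK, φ, hφ, hφlim⟩ := (hK1cpt.inter_right hMeClosed).tendsto_subseq huMem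
    -- v ∈ Mi
    have hvMi : v ∈ Mi := by
      rw [hMiClosed.mem_iff_infDist_zero hMiNe]
      refine le_antisymm ?_ infDist_nonneg
      by_contra hpos
      push_neg at hpos
      obtain ⟨δη, hδηpos, hδη⟩ := hMiStable (infDist v Mi / 2) (half_pos hpos) Δ hΔ
      obtain ⟨k₁, hk₁⟩ := eventually_atTop.mp (hxd0.eventually_lt_const hδηpos)
      have hall : ∀ k ≥ k₁, ∀ n : ℕ, infDist (g^[n] (x k)) Mi < infDist v Mi / 2 := by
        intro k hk n
        have hmi : infDist (x k) Mi < δη :=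
          lt_of_le_of_lt (infDist_le_infDist_of_subset hMoSub hMoNe) (hk₁ k hk)
        exact hδη (x k) (hxMe k) hmi (hxΔ k) n
      have hlim : Tendsto (fun j => infDist (u (φ j)) Mi) atTop (𝓝 (infDist v Mi)) :=
        ((continuous_infDist_pt Mi).tendsto v).comp hφlim
      have hev : ∀ᶠ j in atTop, infDist (u (φ j)) Mi ≤ infDist v Mi / 2 := by
        filter_upwards [eventually_ge_atTop k₁] with j hj
        exact (hall (k₀ + φ j) (le_trans hj (le_trans hφ.le_apply (Nat.le_add_left _ _))) _).le
      have hle := le_of_tendsto hlim hev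
      linarith
    have hvK1 : infDist v Mo ≤ 1 := hvK.1
    have hua := hNua v ⟨hvK1, hvMi⟩ (N + 1) (Nat.le_succ N)
    have hlim2 : Tendsto (fun j => g^[N + 1] (u (φ j))) atTop (𝓝 (g^[N + 1] v)) :=
      ((hg.iterate (N + 1)).tendsto v).comp hφlim
    have heq : ∀ j, g^[N + 1] (u (φ j)) = g^[m (k₀ + φ j)] (x (k₀ + φ j)) := by
      intro j
      have hk := (hk₀ (k₀ + φ j) (Nat.le_add_right _ _)).1
      rw [hudef]
      rw [← Function.iterate_add_apply]
      congr 1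
      omega
    have hlim3 : Tendsto (fun j => infDist (g^[N + 1] (u (φ j))) Mo) atTop
        (𝓝 (infDist (g^[N + 1] v) Mo)) :=
      ((continuous_infDist_pt Mo).tendsto _).comp hlim2
    have hge : ε' ≤ infDist (g^[N + 1] v) Mo := by
      refine ge_of_tendsto hlim3 (Eventually.of_forall fun j => ?_)
      rw [heq j]
      exact hm1 _
    linarith [hua, hge, hε']
  refine ⟨hStab, ?_⟩
  -- Part 2: local attraction
  obtain ⟨δ₁, hδ₁pos, hδ₁⟩ := hStab 1 one_pos (R + 2) (by linarith)
  refine ⟨min δ₁ 1, lt_min hδ₁pos one_pos, fun x hxMe hxd => ?_⟩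
  have hxd1 : infDist x Mo < 1 := lt_of_lt_of_le hxd (min_le_right _ _)
  have hxnorm : ‖x‖ < R + 2 := hnormle x hxd1.le
  have horb : ∀ n : ℕ, infDist (g^[n] x) Mo < 1 :=
    hδ₁ x hxMe (lt_of_lt_of_le hxd (min_le_left _ _)) hxnorm
  rw [Metric.tendsto_atTop]
  intro η hη
  obtain ⟨δ₂, hδ₂pos, hδ₂⟩ := hStab (min η 1) (lt_min hη one_pos) (R + 2) (by linarith)
  obtain ⟨N, hNua⟩ := ua hg hMoCompact hMoNe hMiInv hMoStable hMoAttr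
    (hK1cpt.inter_right hMiClosed) Set.inter_subset_right hδ₂pos
  have hoMem : ∀ n : ℕ, g^[n] x ∈ K1 ∩ Me := fun n => ⟨(horb n).le, hMeIter x hxMe n⟩
  obtain ⟨w, hwK, φ, hφ, hφlim⟩ := (hK1cpt.inter_right hMeClosed).tendsto_subseq hoMem
  have hwMi : w ∈ Mi := by
    rw [hMiClosed.mem_iff_infDist_zero hMiNe]
    have hlim : Tendsto (fun j => infDist (g^[φ j] x) Mi) atTop (𝓝 (infDist w Mi)) :=
      ((continuous_infDist_pt Mi).tendsto w).comp hφlim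
    have hlim0 : Tendsto (fun j => infDist (g^[φ j] x) Mi) atTop (𝓝 0) :=
      (hMiAttr x hxMe).comp hφ.tendsto_atTop
    exact tendsto_nhds_unique hlim hlim0
  have hNw : infDist (g^[N] w) Mo < δ₂ := hNua w ⟨hwK.1, hwMi⟩ N le_rfl
  have hlim2 : Tendsto (fun j => infDist (g^[N] (g^[φ j] x)) Mo) atTop
      (𝓝 (infDist (g^[N] w) Mo)) :=
    ((continuous_infDist_pt Mo).tendsto _).comp (((hg.iterate N).tendsto w).comp hφlim)
  obtain ⟨j, hj⟩ := (hlim2.eventually_lt_const hNw).exists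
  rw [← Function.iterate_add_apply] at hj
  set T := N + φ j with hTdef
  have hzMe : g^[T] x ∈ Me := hMeIter x hxMe T
  have hznorm : ‖g^[T] x‖ < R + 2 := hnormle _ (horb T).le
  have hzall : ∀ nn : ℕ, infDist (g^[nn] (g^[T] x)) Mo < min η 1 := hδ₂ _ hzMe hj hznorm
  refine ⟨T, fun n hn => ?_⟩
  have : infDist (g^[n] x) Mo < min η 1 := by
    have := hzall (n - T)
    rwa [← Function.iterate_add_apply, Nat.sub_add_cancel hn] at this
  have hnn : 0 ≤ infDist (g^[n] x) Mo := infDist_nonneg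
  rw [Real.dist_eq, abs_of_nonneg (by simpa using hnn)]
  · exact lt_of_lt_of_le (by simpa using this) (min_le_left _ _)
end

section
/- Let g : ℝⁿ → ℝⁿ be continuous and consider the discrete-time system x⁺ = g(x). Suppose: (i) Mₑ ⊆ ℝⁿ is closed and forward invariant (g(Mₑ) ⊆ Mₑ); (ii) Mᵢ ⊆ Mₑ is closed, stable relative to Mₑ, and globally attractive relative to Mₑ; (iii) M∘ ⊆ Mᵢ is compact, stable relative to Mᵢ, and globally attractive relative to Mᵢ; (iv) solutions are uniformly globally bounded relative to Mₑ, i.e. for every compact K ⊆ Mₑ there exists Δ > 0 such that ‖g^[n](x)‖ < Δ for all x ∈ K and all n ∈ ℕ. Then M∘ is uniformly globally asymptotically stable relative to Mₑ: M∘ is stable relative to Mₑ, and for every compact K ⊆ Mₑ and every ε > 0 there exists N ∈ ℕ such that dist(g^[n](x), M∘) ≤ ε for all x ∈ K and all n ≥ N. -/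
open Metric Filter Topology

theorem hierarchical_UGAS_discrete {d : ℕ}
    (g : EuclideanSpace ℝ (Fin d) → EuclideanSpace ℝ (Fin d)) (hg : Continuous g)
    (Me Mi Mo : Set (EuclideanSpace ℝ (Fin d)))
    (hMeClosed : IsClosed Me) (hMeInv : g '' Me ⊆ Me)
    (hMiSub : Mi ⊆ Me) (hMiClosed : IsClosed Mi)
    (hMiStable : StableRel g Me Mi) (hMiAttr : GloballyAttractiveRel g Me Mi)
    (hMoSub : Mo ⊆ Mi) (hMoCompact : IsCompact Mo)
    (hMoStable : StableRel g Mi Mo) (hMoAttr : GloballyAttractiveRel g Mi Mo)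
    (hUGB : ∀ K : Set (EuclideanSpace ℝ (Fin d)), IsCompact K → K ⊆ Me →
      ∃ Δ > (0 : ℝ), ∀ x ∈ K, ∀ n : ℕ, ‖g^[n] x‖ < Δ) :
    StableRel g Me Mo ∧
      ∀ K : Set (EuclideanSpace ℝ (Fin d)), IsCompact K → K ⊆ Me →
        ∀ ε > (0 : ℝ), ∃ N : ℕ, ∀ x ∈ K, ∀ n ≥ N, infDist (g^[n] x) Mo ≤ ε := by
  classical
  -- trivial case : Mo empty
  rcases Set.eq_empty_or_nonempty Mo with hMoE | hMoNe
  · subst hMoE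
    constructor
    · intro ε hε Δ hΔ
      exact ⟨1, one_pos, fun x _ _ _ n => by simpa [Metric.infDist_empty] using hε⟩
    · intro K _ _ ε hε
      exact ⟨0, fun x _ n _ => by simp [Metric.infDist_empty]; linarith⟩
  have hMiNe : Mi.Nonempty := ⟨hMoNe.some, hMoSub hMoNe.some_mem⟩
  have hgn : ∀ n : ℕ, Continuous (g^[n]) := fun n => hg.iterate n
  -- forward invariance of Me along iterates
  have hMeIter : ∀ x ∈ Me, ∀ n : ℕ, g^[n] x ∈ Me := by
    intro x hx n
    induction n with
    | zero => simpa using hx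
    | succ n ih => rw [Function.iterate_succ_apply']; exact hMeInv ⟨_, ih, rfl⟩
  -- forward invariance of Mi
  have hMiInv : ∀ x ∈ Mi, ∀ n : ℕ, g^[n] x ∈ Mi := by
    intro x hx n
    have h0 : ∀ η > (0:ℝ), infDist (g^[n] x) Mi < η := by
      intro η hη
      obtain ⟨δ, hδpos, hδ⟩ := hMiStable η hη (‖x‖ + 1) (by positivity)
      exact hδ x (hMiSub hx) (by simpa [infDist_zero_of_mem hx] using hδpos)
        (by linarith) n
    have : infDist (g^[n] x) Mi = 0 := le_antisymm
      (le_of_forall_pos_le_add fun η hη => by simpa using (h0 η hη).le) infDist_nonneg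
    exact (hMiClosed.mem_iff_infDist_zero hMiNe).mpr this
  -- forward invariance of Mo
  have hMoInv : ∀ x ∈ Mo, ∀ n : ℕ, g^[n] x ∈ Mo := by
    intro x hx n
    have h0 : ∀ η > (0:ℝ), infDist (g^[n] x) Mo < η := by
      intro η hη
      obtain ⟨δ, hδpos, hδ⟩ := hMoStable η hη (‖x‖ + 1) (by positivity)
      exact hδ x (hMoSub hx) (by simpa [infDist_zero_of_mem hx] using hδpos)
        (by linarith) n
    have : infDist (g^[n] x) Mo = 0 := le_antisymm
      (le_of_forall_pos_le_add fun η hη => by simpa using (h0 η hη).le) infDist_nonneg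
    exact ((hMoCompact.isClosed).mem_iff_infDist_zero hMoNe).mpr this
  -- the ultrafilter we use for limit extraction
  set U : Ultrafilter ℕ := hyperfilter ℕ with hUdef
  have hUtop : (U : Filter ℕ) ≤ atTop := by
    rw [← Nat.cofinite_eq_atTop]; exact hyperfilter_le_cofinite
  have hulim : ∀ (R : ℝ) (fn : ℕ → EuclideanSpace ℝ (Fin d)),
      (∀ k, fn k ∈ closedBall (0 : EuclideanSpace ℝ (Fin d)) R) →
      ∃ z ∈ closedBall (0 : EuclideanSpace ℝ (Fin d)) R, Tendsto fn (U : Filter ℕ) (𝓝 z) := by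
    intro R fn hfn
    obtain ⟨z, hzB, hz⟩ := (isCompact_closedBall (0 : EuclideanSpace ℝ (Fin d)) R).ultrafilter_le_nhds
      (U.map fn) (by rw [Ultrafilter.coe_map, le_principal_iff, mem_map]
                     exact Filter.Eventually.of_forall hfn)
    exact ⟨z, hzB, by rwa [Ultrafilter.coe_map] at hz⟩
  -- PART 1 : stability of Mo relative to Me
  have hStab : StableRel g Me Mo := by
    intro ε hε Δ hΔ
    by_contra hcon
    push_neg at hcon
    choose x hxMe hxd hxΔ n hn using fun k : ℕ => hcon ((k : ℝ) + 1)⁻¹ (by positivity)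
    -- uniform bound on the trajectories
    obtain ⟨Δ', hΔ'pos, hΔ'⟩ := hUGB (Me ∩ closedBall 0 Δ)
      ((isCompact_closedBall _ _).inter_left hMeClosed) Set.inter_subset_left
    have hxK : ∀ k, x k ∈ Me ∩ closedBall 0 Δ :=
      fun k => ⟨hxMe k, mem_closedBall_zero_iff.mpr (hxΔ k).le⟩
    have hbound : ∀ k j, g^[j] (x k) ∈ closedBall (0 : EuclideanSpace ℝ (Fin d)) Δ' :=
      fun k j => mem_closedBall_zero_iff.mpr (hΔ' _ (hxK k) j).le
    -- escape times tend to infinity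
    have hntop : Tendsto n atTop atTop := by
      rw [tendsto_atTop_atTop]
      intro N
      have hVopen : IsOpen (⋂ j ∈ Finset.range (N + 1),
          {z : EuclideanSpace ℝ (Fin d) | infDist (g^[j] z) Mo < ε}) :=
        isOpen_biInter_finset fun j _ =>
          isOpen_lt ((continuous_infDist_pt Mo).comp (hgn j)) continuous_const
      have hMoV : Mo ⊆ ⋂ j ∈ Finset.range (N + 1),
          {z : EuclideanSpace ℝ (Fin d) | infDist (g^[j] z) Mo < ε} := by
        intro p hp
        simp only [Set.mem_iInter, Set.mem_setOf_eq]
        intro j _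
        simpa [infDist_zero_of_mem (hMoInv p hp j)] using hε
      obtain ⟨r, hrpos, hrV⟩ := hMoCompact.exists_thickening_subset_open hVopen hMoV
      obtain ⟨K₁, hK₁⟩ := exists_nat_gt r⁻¹
      refine ⟨K₁, fun k hk => ?_⟩
      have hk' : ((k : ℝ) + 1)⁻¹ < r := by
        rw [inv_lt_comm₀ (by positivity) hrpos]
        calc r⁻¹ < K₁ := hK₁
          _ ≤ (k : ℝ) := by exact_mod_cast hk
          _ < (k : ℝ) + 1 := by linarith
      have hxV := hrV ((mem_thickening_iff_infDist_lt hMoNe).mpr ((hxd k).trans hk'))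
      simp only [Set.mem_iInter, Set.mem_setOf_eq] at hxV
      by_contra h
      push_neg at h
      exact absurd (hxV (n k) (by simp [Nat.lt_succ_iff] at *; omega))
        (not_lt.mpr (hn k))
    -- backward limits along the ultrafilter
    have hexz := fun m : ℕ => hulim Δ' (fun k => g^[n k - m] (x k)) (fun k => hbound k _)
    choose z hzB hzT using hexz
    -- each z m belongs to Mi
    have hzMi : ∀ m, z m ∈ Mi := by
      intro m
      have hle : ∀ η > (0:ℝ), infDist (z m) Mi ≤ η := by
        intro η hη
        obtain ⟨δη, hδηpos, hδη⟩ := hMiStable η hη Δ hΔ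
        have hev : ∀ᶠ k in (U : Filter ℕ), infDist (g^[n k - m] (x k)) Mi < η := by
          have h1 : ∀ᶠ k : ℕ in atTop, ((k : ℝ) + 1)⁻¹ < δη := by
            obtain ⟨K₁, hK₁⟩ := exists_nat_gt δη⁻¹
            filter_upwards [eventually_ge_atTop K₁] with k hk
            rw [inv_lt_comm₀ (by positivity) hδηpos]
            calc δη⁻¹ < K₁ := hK₁
              _ ≤ (k : ℝ) := by exact_mod_cast hk
              _ < (k : ℝ) + 1 := by linarith
          filter_upwards [hUtop h1] with k hk
          have hdMi : infDist (x k) Mi < δη :=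
            lt_of_le_of_lt (infDist_le_infDist_of_subset hMoSub hMoNe)
              ((hxd k).trans hk)
          exact hδη (x k) (hxMe k) hdMi (hxΔ k) _
        have hT : Tendsto (fun k => infDist (g^[n k - m] (x k)) Mi) (U : Filter ℕ)
            (𝓝 (infDist (z m) Mi)) :=
          ((continuous_infDist_pt Mi).continuousAt.tendsto).comp (hzT m)
        exact le_of_tendsto hT (hev.mono fun k h => h.le)
      have : infDist (z m) Mi = 0 := le_antisymm
        (le_of_forall_pos_le_add fun η hη => by simpa using hle η hη) infDist_nonneg
      exact (hMiClosed.mem_iff_infDist_zero hMiNe).mpr this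
    -- recursion g (z (m+1)) = z m
    have hzrec : ∀ m, g (z (m + 1)) = z m := by
      intro m
      have h1 : Tendsto (fun k => g (g^[n k - (m + 1)] (x k))) (U : Filter ℕ)
          (𝓝 (g (z (m + 1)))) := (hg.continuousAt.tendsto).comp (hzT (m + 1))
      have h2 : ∀ᶠ k in (U : Filter ℕ),
          g (g^[n k - (m + 1)] (x k)) = g^[n k - m] (x k) := by
        filter_upwards [hUtop (hntop.eventually_ge_atTop (m + 1))] with k hk
        have heq : n k - m = (n k - (m + 1)) + 1 := by omega
        rw [heq, Function.iterate_succ_apply']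
      exact tendsto_nhds_unique (Tendsto.congr' h2 h1) (hzT m)
    have hziter : ∀ (T m : ℕ), g^[T] (z (m + T)) = z m := by
      intro T
      induction T with
      | zero => intro m; simp
      | succ T ih =>
        intro m
        calc g^[T + 1] (z (m + (T + 1))) = g^[T] (g (z ((m + T) + 1))) := by
              rw [Function.iterate_succ_apply]; ring_nf
          _ = g^[T] (z (m + T)) := by rw [hzrec (m + T)]
          _ = z m := ih m
    -- z 0 is far from Mo
    have hz0 : ε ≤ infDist (z 0) Mo := by
      have hT : Tendsto (fun k => infDist (g^[n k - 0] (x k)) Mo) (U : Filter ℕ)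
          (𝓝 (infDist (z 0) Mo)) :=
        ((continuous_infDist_pt Mo).continuousAt.tendsto).comp (hzT 0)
      exact ge_of_tendsto' hT (fun k => by simpa using hn k)
    -- a limit point of the backward orbit
    obtain ⟨w, hwB, hwT⟩ := hulim Δ' z hzB
    have hwMi : w ∈ Mi := hMiClosed.mem_of_tendsto hwT (Filter.Eventually.of_forall hzMi)
    obtain ⟨μ, hμpos, hμ⟩ := hMoStable ε hε (Δ' + 1) (by linarith)
    obtain ⟨T, hT⟩ : ∃ T : ℕ, infDist (g^[T] w) Mo < μ :=
      ((hMoAttr w hwMi).eventually_lt_const hμpos).exists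
    have hcont : Tendsto (fun m => infDist (g^[T] (z m)) Mo) (U : Filter ℕ)
        (𝓝 (infDist (g^[T] w) Mo)) :=
      (((continuous_infDist_pt Mo).comp (hgn T)).continuousAt.tendsto).comp hwT
    have hev1 : ∀ᶠ m in (U : Filter ℕ), infDist (g^[T] (z m)) Mo < μ :=
      hcont.eventually_lt_const hT
    have hev2 : ∀ᶠ m in (U : Filter ℕ), T + 1 ≤ m := hUtop (eventually_ge_atTop (T + 1))
    obtain ⟨m, hm1, hm2⟩ := (hev1.and hev2).exists
    set m' := m - T with hm'def
    have hmeq : m' + T = m := by omega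
    have h1 : g^[T] (z m) = z m' := by rw [← hmeq]; exact hziter T m'
    have hzm'd : infDist (z m') Mo < μ := h1 ▸ hm1
    have hnorm : ‖z m'‖ < Δ' + 1 := by
      have := mem_closedBall_zero_iff.mp (hzB m'); linarith
    have hfin := hμ (z m') (hzMi m') hzm'd hnorm m'
    have h2 : g^[m'] (z m') = z 0 := by
      have := hziter m' 0
      rwa [Nat.zero_add] at this
    rw [h2] at hfin
    exact absurd hfin (not_lt.mpr hz0)
  -- PART 2 : uniform attraction on compact sets
  refine ⟨hStab, ?_⟩
  intro K hK hKMe ε hε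
  obtain ⟨ΔK, hΔKpos, hΔK⟩ := hUGB K hK hKMe
  obtain ⟨δ, hδpos, hδ⟩ := hStab ε hε ΔK hΔKpos
  -- pointwise: trajectories get δ-close to Mo
  have hpt : ∀ x ∈ K, ∃ N : ℕ, infDist (g^[N] x) Mo < δ := by
    intro x hx
    have hxMe := hKMe hx
    obtain ⟨w, hwB, hwT⟩ := hulim ΔK (fun j => g^[j] x)
      (fun j => mem_closedBall_zero_iff.mpr (hΔK x hx j).le)
    have hwMi : w ∈ Mi := by
      have h0 : Tendsto (fun j => infDist (g^[j] x) Mi) (U : Filter ℕ)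
          (𝓝 (infDist w Mi)) := ((continuous_infDist_pt Mi).continuousAt.tendsto).comp hwT
      have h1 : Tendsto (fun j => infDist (g^[j] x) Mi) (U : Filter ℕ) (𝓝 0) :=
        (hMiAttr x hxMe).mono_left hUtop
      exact (hMiClosed.mem_iff_infDist_zero hMiNe).mpr (tendsto_nhds_unique h0 h1)
    obtain ⟨T, hT⟩ : ∃ T : ℕ, infDist (g^[T] w) Mo < δ :=
      ((hMoAttr w hwMi).eventually_lt_const hδpos).exists
    have hcont : Tendsto (fun j => infDist (g^[T] (g^[j] x)) Mo) (U : Filter ℕ)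
        (𝓝 (infDist (g^[T] w) Mo)) :=
      (((continuous_infDist_pt Mo).comp (hgn T)).continuousAt.tendsto).comp hwT
    obtain ⟨j, hj⟩ := (hcont.eventually_lt_const hT).exists
    refine ⟨T + j, ?_⟩
    rwa [Function.iterate_add_apply]
  choose! N hN using hpt
  have hcov : K ⊆ ⋃ x ∈ K, {y | infDist (g^[N x] y) Mo < δ} :=
    fun y hy => Set.mem_biUnion hy (hN y hy)
  obtain ⟨t, htK, htfin, hcov'⟩ := hK.elim_finite_subcover_image
    (fun x _ => isOpen_lt ((continuous_infDist_pt Mo).comp (hgn (N x))) continuous_const)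
    hcov
  refine ⟨htfin.toFinset.sup N, fun y hy n hn => ?_⟩
  obtain ⟨x, hxt, hyx⟩ := Set.mem_iUnion₂.mp (hcov' hy)
  have hNx : N x ≤ n := le_trans (Finset.le_sup (htfin.mem_toFinset.mpr hxt)) hn
  have h1 := hδ (g^[N x] y) (hMeIter y (hKMe hy) (N x)) hyx (hΔK y hy (N x)) (n - N x)
  rw [← Function.iterate_add_apply, Nat.sub_add_cancel hNx] at h1
  exact h1.le
end

section
/- Let g : ℝⁿ → ℝⁿ be continuous and consider the discrete-time system x⁺ = g(x). Suppose: (i) Mₑ ⊆ ℝⁿ is closed and forward invariant (g(Mₑ) ⊆ Mₑ); (ii) Mᵢ ⊆ Mₑ is closed, stable relative to Mₑ, and locally attractive relative to Mₑ (there exists δ₁ > 0 such that every x ∈ Mₑ with dist(x, Mᵢ) < δ₁ satisfies dist(g^[n](x), Mᵢ) → 0); (iii) M∘ ⊆ Mᵢ is compact, stable relative to Mᵢ, and locally attractive relative to Mᵢ (there exists δ₂ > 0 such that every x ∈ Mᵢ with dist(x, M∘) < δ₂ satisfies dist(g^[n](x), M∘) → 0). Then M∘ is asymptotically stable relative to Mₑ: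 M∘ is stable relative to Mₑ, and there exists δ > 0 such that every x ∈ Mₑ with dist(x, M∘) < δ satisfies dist(g^[n](x), M∘) → 0 as n → ∞. -/
open Metric Filter Topology

/-!
If stability or attractivity of `Mo` relative to `Me` failed, there would be orbit segments in `Me`
that stay within some `ε < δ₂` of the compact set `Mo` for longer and longer times and then end
`r`-far from it, while (by stability or attractivity of `Mi`) lying ever closer to `Mi`. Read
backwards from their end points, these segments have a cluster point in the compact
`ε`-neighbourhood of `Mo`: a complete backward orbit in `Mi` within `ε` of `Mo` whose first point
is mapped `r`-far from `Mo`. No such orbit exists. By stability of `Mo` relative to `Mi`, all its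
points stay a fixed distance away from `Mo`, hence so does every forward iterate of each of its
cluster points `u`; yet `u` lies in `Mi` within `δ₂` of `Mo` and is therefore attracted to `Mo`.
-/

def AttractiveWithin {d : ℕ} (g : EuclideanSpace ℝ (Fin d) → EuclideanSpace ℝ (Fin d))
    (Y X : Set (EuclideanSpace ℝ (Fin d))) (δ : ℝ) : Prop :=
  ∀ x ∈ Y, infDist x X < δ → Tendsto (fun n : ℕ => infDist (g^[n] x) X) atTop (𝓝 0)

theorem Function.apply_iterate_sub_succ {α : Type*} (f : α → α) {m j : ℕ} (h : j < m) (x : α) :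
    f (f^[m - (j + 1)] x) = f^[m - j] x := by
  rw [← Function.iterate_succ_apply' f, show (m - (j + 1)).succ = m - j by omega]

theorem MapClusterPt.eq_of_tendsto {X ι : Type*} [TopologicalSpace X] [T2Space X]
    {l : Filter ι} {u : ι → X} {x y : X} (hx : MapClusterPt x l u) (hy : Tendsto u l (𝓝 y)) :
    x = y := by
  by_contra hne
  exact clusterPt_iff_not_disjoint.1 (hx.clusterPt.mono (g := 𝓝 y) hy)
    (disjoint_nhds_nhds.2 hne)

theorem MapClusterPt.iterate_of_backward_orbit {X : Type*} [TopologicalSpace X] {g : X → X}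
    (hg : Continuous g) {w : ℕ → X} (hw : ∀ j, g (w (j + 1)) = w j) {u : X}
    (hu : MapClusterPt u atTop w) (n : ℕ) : MapClusterPt (g^[n] u) atTop w := by
  induction n with
  | zero => exact hu
  | succ n ih =>
    have hshift : MapClusterPt (g^[n] u) atTop (fun j => w (j + 1)) := by
      rw [← Function.comp_def, mapClusterPt_comp, map_add_atTop_eq_nat]
      exact ih
    rw [Function.iterate_succ_apply']
    simpa only [Function.comp_def, hw] using hshift.continuousAt_comp hg.continuousAt

theorem Metric.mem_cthickening_of_infDist_le {α : Type*} [PseudoMetricSpace α] {s : Set α}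
    {x : α} {ε : ℝ} (hs : s.Nonempty) (h : infDist x s ≤ ε) : x ∈ cthickening ε s := by
  rw [mem_cthickening_iff, ← ENNReal.ofReal_toReal (infEDist_ne_top hs)]
  exact ENNReal.ofReal_le_ofReal h

theorem Metric.nonempty_of_infDist_ne_zero {α : Type*} [PseudoMetricSpace α] {s : Set α}
    {x : α} (h : infDist x s ≠ 0) : s.Nonempty :=
  Set.nonempty_iff_ne_empty.2 fun hs => h (hs ▸ infDist_empty)

section

variable {d : ℕ} {g : EuclideanSpace ℝ (Fin d) → EuclideanSpace ℝ (Fin d)}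

namespace StableRel

variable {Y X : Set (EuclideanSpace ℝ (Fin d))}

theorem infDist_iterate_eq_zero (h : StableRel g Y X) {x : EuclideanSpace ℝ (Fin d)}
    (hx : x ∈ Y) (hx₀ : infDist x X = 0) (n : ℕ) : infDist (g^[n] x) X = 0 := by
  refine le_antisymm (le_of_forall_pos_le_add fun ε hε => ?_) infDist_nonneg
  obtain ⟨δ, hδ, hstab⟩ := h ε hε (‖x‖ + 1) (by positivity)
  simpa using (hstab x hx (hx₀ ▸ hδ) (lt_add_one _) n).le

theorem tendsto_infDist_iterate (h : StableRel g Y X) {ι : Type*} {l : Filter ι}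
    {x : ι → EuclideanSpace ℝ (Fin d)} {Δ : ℝ} (hY : ∀ k, x k ∈ Y) (hΔ : ∀ k, ‖x k‖ < Δ)
    (hx : Tendsto (fun k => infDist (x k) X) l (𝓝 0)) (n : ι → ℕ) :
    Tendsto (fun k => infDist (g^[n k] (x k)) X) l (𝓝 0) := by
  refine tendsto_order.2 ⟨fun a ha => .of_forall fun _ => ha.trans_le infDist_nonneg,
    fun ε hε => ?_⟩
  obtain ⟨δ, hδ, hstab⟩ := h ε hε (max Δ 1) (by positivity)
  filter_upwards [hx.eventually (gt_mem_nhds hδ)] with k hk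
  exact hstab _ (hY k) hk ((hΔ k).trans_le (le_max_left _ _)) (n k)

end StableRel

variable {Mi Mo : Set (EuclideanSpace ℝ (Fin d))} {ε δ₂ : ℝ}

theorem infDist_eq_zero_of_backward_orbit (hg : Continuous g) (hMiClosed : IsClosed Mi)
    (hMoCompact : IsCompact Mo) (hMoStable : StableRel g Mi Mo)
    (hMoAttr : AttractiveWithin g Mi Mo δ₂) {w : ℕ → EuclideanSpace ℝ (Fin d)}
    (hw : ∀ j, g (w (j + 1)) = w j) (hwMi : ∀ j, w j ∈ Mi) (hwMo : ∀ j, infDist (w j) Mo ≤ ε)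
    (hε : ε < δ₂) : infDist (w 0) Mo = 0 := by
  by_contra h₀
  have hMoNe : Mo.Nonempty := nonempty_of_infDist_ne_zero h₀
  have hK : IsCompact (cthickening ε Mo) := hMoCompact.cthickening
  have hwK : ∀ j, w j ∈ cthickening ε Mo := fun j =>
    mem_cthickening_of_infDist_le hMoNe (hwMo j)
  obtain ⟨Δ, hΔ, hKΔ⟩ := hK.isBounded.subset_ball_lt 0 0
  obtain ⟨δ, hδ, hstab⟩ := hMoStable _ (lt_of_le_of_ne infDist_nonneg (Ne.symm h₀)) Δ hΔ
  have hiter : ∀ j, g^[j] (w j) = w 0 := by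
    intro j
    induction j with
    | zero => rfl
    | succ j ih => rw [Function.iterate_succ_apply, hw, ih]
  have hfar : ∀ j, δ ≤ infDist (w j) Mo := fun j => not_lt.1 fun hj =>
    (hiter j ▸ hstab (w j) (hwMi j) hj (mem_ball_zero_iff.1 (hKΔ (hwK j))) j).false
  obtain ⟨u, -, hu⟩ := hK.exists_mapClusterPt (u := w) (f := atTop)
    (tendsto_principal.2 (.of_forall hwK))
  have huMi : u ∈ Mi := hMiClosed.mem_of_mapClusterPt hu (.of_forall hwMi)
  have huMo : infDist u Mo ≤ ε :=
    (isClosed_le (continuous_infDist_pt _) continuous_const).mem_of_mapClusterPt hu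
      (.of_forall hwMo)
  obtain ⟨n, hn⟩ := ((hMoAttr u huMi (huMo.trans_lt hε)).eventually (gt_mem_nhds hδ)).exists
  have hfar_u : δ ≤ infDist (g^[n] u) Mo :=
    (isClosed_le continuous_const (continuous_infDist_pt _)).mem_of_mapClusterPt
      (hu.iterate_of_backward_orbit hg hw n) (.of_forall hfar)
  exact hn.not_ge hfar_u

theorem exists_backward_orbit_of_segments {ι : Type*} {l : Filter ι} [l.NeBot]
    {x : ι → EuclideanSpace ℝ (Fin d)} {m : ι → ℕ} {r : ℝ} (hg : Continuous g)
    (hMiClosed : IsClosed Mi) (hMiNe : Mi.Nonempty) (hMoCompact : IsCompact Mo)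
    (hMoNe : Mo.Nonempty) (hm : Tendsto m l atTop)
    (hnear : ∀ᶠ k in l, ∀ j < m k, infDist (g^[j] (x k)) Mo ≤ ε)
    (hMi : ∀ j, Tendsto (fun k => infDist (g^[m k - j] (x k)) Mi) l (𝓝 0))
    (hend : ∀ᶠ k in l, r ≤ infDist (g^[m k] (x k)) Mo) :
    ∃ w : ℕ → EuclideanSpace ℝ (Fin d), (∀ j, g (w (j + 1)) = w j) ∧ (∀ j, w j ∈ Mi) ∧
      (∀ j, infDist (w j) Mo ≤ ε) ∧ r ≤ infDist (g (w 0)) Mo := by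
  set F : ι → ℕ → EuclideanSpace ℝ (Fin d) := fun k j => g^[m k - (j + 1)] (x k)
  have hpos : ∀ᶠ k in l, 0 < m k := hm.eventually_gt_atTop 0
  have hFMo : ∀ᶠ k in l, ∀ j, infDist (F k j) Mo ≤ ε := by
    filter_upwards [hnear, hpos] with k hk hk₀ j using hk _ (by omega)
  obtain ⟨w, -, hw⟩ := (isCompact_univ_pi fun _ => hMoCompact.cthickening (r := ε))
    |>.exists_mapClusterPt (u := F) <| tendsto_principal.2 <| hFMo.mono fun k hk =>
      Set.mem_univ_pi.2 fun j => mem_cthickening_of_infDist_le hMoNe (hk j)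
  have hwj : ∀ j, MapClusterPt (w j) l (fun k => F k j) := fun j =>
    hw.continuousAt_comp (continuous_apply j).continuousAt
  refine ⟨w, fun j => ?_, fun j => ?_, fun j => ?_, ?_⟩
  · refine (isClosed_eq (f := fun v : ℕ → EuclideanSpace ℝ (Fin d) => g (v (j + 1)))
      (g := fun v => v j) (by fun_prop) (by fun_prop)).mem_of_mapClusterPt hw ?_
    filter_upwards [hm.eventually_gt_atTop (j + 1)] with k hk
    exact Function.apply_iterate_sub_succ g hk (x k)
  · refine (hMiClosed.mem_iff_infDist_zero hMiNe).2 ?_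
    exact ((hwj j).continuousAt_comp (continuous_infDist_pt Mi).continuousAt).eq_of_tendsto
      (hMi (j + 1))
  · exact (isClosed_le (continuous_infDist_pt _) continuous_const).mem_of_mapClusterPt
      (hwj j) (hFMo.mono fun k hk => hk j)
  · refine (isClosed_le continuous_const
      ((continuous_infDist_pt _).comp hg)).mem_of_mapClusterPt (hwj 0) ?_
    filter_upwards [hend, hpos] with k hk hk₀
    simpa [F, Function.apply_iterate_sub_succ g hk₀] using hk

theorem tendsto_infDist_of_segments_near {ι : Type*} {l : Filter ι}
    {x : ι → EuclideanSpace ℝ (Fin d)} {m : ι → ℕ} (hg : Continuous g)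
    (hMiClosed : IsClosed Mi) (hMoSub : Mo ⊆ Mi) (hMoCompact : IsCompact Mo)
    (hMoStable : StableRel g Mi Mo) (hMoAttr : AttractiveWithin g Mi Mo δ₂) (hε : ε < δ₂)
    (hm : Tendsto m l atTop) (hnear : ∀ᶠ k in l, ∀ j < m k, infDist (g^[j] (x k)) Mo ≤ ε)
    (hMi : ∀ j, Tendsto (fun k => infDist (g^[m k - j] (x k)) Mi) l (𝓝 0)) :
    Tendsto (fun k => infDist (g^[m k] (x k)) Mo) l (𝓝 0) := by
  refine tendsto_order.2 ⟨fun a ha => .of_forall fun _ => ha.trans_le infDist_nonneg,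
    fun r hr => ?_⟩
  by_contra hfar
  simp only [not_eventually, not_lt] at hfar
  obtain ⟨k, hk⟩ := hfar.exists
  have hMoNe : Mo.Nonempty := nonempty_of_infDist_ne_zero (hr.trans_le hk).ne'
  have := frequently_iff_neBot.1 hfar
  obtain ⟨w, hw, hwMi, hwMo, hend⟩ := exists_backward_orbit_of_segments
    (l := l ⊓ 𝓟 {k | r ≤ infDist (g^[m k] (x k)) Mo}) hg hMiClosed (hMoNe.mono hMoSub)
    hMoCompact hMoNe (hm.mono_left inf_le_left) (hnear.filter_mono inf_le_left)
    (fun j => (hMi j).mono_left inf_le_left) (mem_inf_of_right (mem_principal_self _))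
  have hw₀ := infDist_eq_zero_of_backward_orbit hg hMiClosed hMoCompact hMoStable hMoAttr
    hw hwMi hwMo hε
  have := hMoStable.infDist_iterate_eq_zero (hwMi 0) hw₀ 1
  rw [Function.iterate_one] at this
  linarith

variable {Me : Set (EuclideanSpace ℝ (Fin d))}

theorem StableRel.trans_of_attractiveWithin (hg : Continuous g) (hMiClosed : IsClosed Mi)
    (hMiStable : StableRel g Me Mi) (hMoSub : Mo ⊆ Mi) (hMoCompact : IsCompact Mo)
    (hMoStable : StableRel g Mi Mo) (hδ₂ : 0 < δ₂) (hMoAttr : AttractiveWithin g Mi Mo δ₂) :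
    StableRel g Me Mo := by
  classical
  intro ε hε Δ hΔ
  set ε' := min ε (δ₂ / 2)
  have hε' : 0 < ε' := by positivity
  by_contra! hexit
  choose x hxMe hxMo hxΔ n hn using fun k : ℕ => hexit (1 / (k + 1)) (by positivity)
  have hMoNe : Mo.Nonempty := nonempty_of_infDist_ne_zero (hε.trans_le (hn 0)).ne'
  have hx₀ : Tendsto (fun k => infDist (x k) Mo) atTop (𝓝 0) :=
    squeeze_zero (fun _ => infDist_nonneg) (fun k => (hxMo k).le)
      tendsto_one_div_add_atTop_nhds_zero_nat
  have hexits : ∀ k, ∃ j, ε' ≤ infDist (g^[j] (x k)) Mo :=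
    fun k => ⟨n k, (min_le_left _ _).trans (hn k)⟩
  set m : ℕ → ℕ := fun k => Nat.find (hexits k)
  -- `x k` tends to the compact set `Mo`, which `g^[i]` maps into itself.
  have hstart : ∀ i, ∀ᶠ k in atTop, infDist (g^[i] (x k)) Mo < ε' := by
    intro i
    have hopen : IsOpen {z | infDist (g^[i] z) Mo < ε'} :=
      isOpen_lt ((continuous_infDist_pt Mo).comp (hg.iterate i)) continuous_const
    refine ((tendsto_nhdsSet hMoCompact hMoNe).2 fun δ hδ => hx₀.eventually (gt_mem_nhds hδ))
      (hopen.mem_nhdsSet.2 fun z hz => ?_)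
    simpa [hMoStable.infDist_iterate_eq_zero (hMoSub hz) (infDist_zero_of_mem hz) i] using hε'
  have hm : Tendsto m atTop atTop := tendsto_atTop.2 fun N =>
    ((eventually_all_finite (Set.finite_lt_nat N)).2 fun i _ => hstart i).mono fun k hk =>
      (Nat.le_find_iff _ _).2 fun i hi => not_le.2 (hk i hi)
  have hMi : Tendsto (fun k => infDist (x k) Mi) atTop (𝓝 0) :=
    squeeze_zero (fun _ => infDist_nonneg)
      (fun k => infDist_le_infDist_of_subset hMoSub hMoNe) hx₀
  have hend := tendsto_infDist_of_segments_near hg hMiClosed hMoSub hMoCompact hMoStable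
    hMoAttr (min_le_right _ _ |>.trans_lt (half_lt_self hδ₂)) hm
    (.of_forall fun k j hj => (not_le.1 (Nat.find_min (hexits k) hj)).le)
    (fun j => hMiStable.tendsto_infDist_iterate hxMe hxΔ hMi _)
  obtain ⟨k, hk⟩ := (hend.eventually (gt_mem_nhds hε')).exists
  exact hk.not_ge (Nat.find_spec (hexits k))

theorem StableRel.exists_attractiveWithin (hg : Continuous g)
    (hMoStableMe : StableRel g Me Mo) (hMiClosed : IsClosed Mi) {δ₁ : ℝ} (hδ₁ : 0 < δ₁)
    (hMiAttr : AttractiveWithin g Me Mi δ₁)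
    (hMoSub : Mo ⊆ Mi) (hMoCompact : IsCompact Mo) (hMoStable : StableRel g Mi Mo)
    (hδ₂ : 0 < δ₂) (hMoAttr : AttractiveWithin g Mi Mo δ₂) :
    ∃ δ > 0, AttractiveWithin g Me Mo δ := by
  obtain ⟨Δ, hΔ, hball⟩ := (hMoCompact.isBounded.thickening (δ := 1)).subset_ball_lt 0 0
  obtain ⟨δ₀, hδ₀, hnear⟩ := hMoStableMe (δ₂ / 2) (by positivity) Δ hΔ
  refine ⟨min δ₀ (min δ₁ 1), by positivity, fun x hx hxMo => ?_⟩
  rcases Mo.eq_empty_or_nonempty with rfl | hMoNe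
  · simpa only [infDist_empty] using tendsto_const_nhds
  obtain ⟨hxδ₀, hxδ₁, hx₁⟩ : infDist x Mo < δ₀ ∧ infDist x Mo < δ₁ ∧ infDist x Mo < 1 := by
    simpa only [lt_min_iff] using hxMo
  have hxΔ : ‖x‖ < Δ :=
    mem_ball_zero_iff.1 (hball ((mem_thickening_iff_infDist_lt hMoNe).2 hx₁))
  have hMi := hMiAttr x hx ((infDist_le_infDist_of_subset hMoSub hMoNe).trans_lt hxδ₁)
  exact tendsto_infDist_of_segments_near (x := fun _ => x) (m := id) hg hMiClosed hMoSub
    hMoCompact hMoStable hMoAttr (half_lt_self hδ₂) tendsto_id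
    (.of_forall fun _ j _ => (hnear x hx hxδ₀ hxΔ j).le)
    (fun j => hMi.comp (tendsto_sub_atTop_nat j))

end

theorem hierarchical_local_asymptotic_stability_discrete_general {d : ℕ}
    (g : EuclideanSpace ℝ (Fin d) → EuclideanSpace ℝ (Fin d)) (hg : Continuous g)
    (Me Mi Mo : Set (EuclideanSpace ℝ (Fin d)))
    (hMiClosed : IsClosed Mi)
    (hMiStable : StableRel g Me Mi)
    (hMiAttr : ∃ δ₁ > (0 : ℝ), ∀ x ∈ Me, infDist x Mi < δ₁ →
      Tendsto (fun n : ℕ => infDist (g^[n] x) Mi) atTop (𝓝 0))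
    (hMoSub : Mo ⊆ Mi) (hMoCompact : IsCompact Mo)
    (hMoStable : StableRel g Mi Mo)
    (hMoAttr : ∃ δ₂ > (0 : ℝ), ∀ x ∈ Mi, infDist x Mo < δ₂ →
      Tendsto (fun n : ℕ => infDist (g^[n] x) Mo) atTop (𝓝 0)) :
    StableRel g Me Mo ∧
      ∃ δ > (0 : ℝ), ∀ x ∈ Me, infDist x Mo < δ →
        Tendsto (fun n : ℕ => infDist (g^[n] x) Mo) atTop (𝓝 0) := by
  obtain ⟨δ₁, hδ₁, hMiAttr⟩ := hMiAttr
  obtain ⟨δ₂, hδ₂, hMoAttr⟩ := hMoAttr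
  have hMoStableMe : StableRel g Me Mo :=
    hMiStable.trans_of_attractiveWithin hg hMiClosed hMoSub hMoCompact hMoStable hδ₂ hMoAttr
  exact ⟨hMoStableMe, hMoStableMe.exists_attractiveWithin hg hMiClosed hδ₁ hMiAttr hMoSub
    hMoCompact hMoStable hδ₂ hMoAttr⟩

theorem hierarchical_local_asymptotic_stability_discrete {d : ℕ}
    (g : EuclideanSpace ℝ (Fin d) → EuclideanSpace ℝ (Fin d)) (hg : Continuous g)
    (Me Mi Mo : Set (EuclideanSpace ℝ (Fin d)))
    (hMeClosed : IsClosed Me) (hMeInv : g '' Me ⊆ Me)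
    (hMiSub : Mi ⊆ Me) (hMiClosed : IsClosed Mi)
    (hMiStable : StableRel g Me Mi)
    (hMiAttr : ∃ δ₁ > (0 : ℝ), ∀ x ∈ Me, infDist x Mi < δ₁ →
      Tendsto (fun n : ℕ => infDist (g^[n] x) Mi) atTop (𝓝 0))
    (hMoSub : Mo ⊆ Mi) (hMoCompact : IsCompact Mo)
    (hMoStable : StableRel g Mi Mo)
    (hMoAttr : ∃ δ₂ > (0 : ℝ), ∀ x ∈ Mi, infDist x Mo < δ₂ →
      Tendsto (fun n : ℕ => infDist (g^[n] x) Mo) atTop (𝓝 0)) :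
    StableRel g Me Mo ∧
      ∃ δ > (0 : ℝ), ∀ x ∈ Me, infDist x Mo < δ →
        Tendsto (fun n : ℕ => infDist (g^[n] x) Mo) atTop (𝓝 0) :=
  hierarchical_local_asymptotic_stability_discrete_general g hg Me Mi Mo hMiClosed hMiStable hMiAttr
    hMoSub hMoCompact hMoStable hMoAttr
end

section
/- Let g : ℝⁿ → ℝⁿ be continuous, let Mₑ ⊆ ℝⁿ be closed and forward invariant (g(Mₑ) ⊆ Mₑ), and let M∘ ⊆ Mₑ be a compact set that is stable relative to Mₑ. Let B := { x ∈ Mₑ : dist(g^[n](x), M∘) → 0 as n → ∞ } be the (relative) basin of attraction of M∘, and assume M∘ is attractive relative to Mₑ, i.e. there exists δ > 0 such that every x ∈ Mₑ with dist(x, M∘) < δ belongs to B. Then attractivity is uniform on compact subsets of the basin: for every compact K ⊆ B and every ε > 0 there exists N ∈ ℕ such that dist(g^[n](x), M∘) ≤ ε for all x ∈ K and all n ≥ N. -/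
open Metric Filter Topology

theorem uniform_attractivity_on_compacts_of_basin_discrete {d : ℕ}
    (g : EuclideanSpace ℝ (Fin d) → EuclideanSpace ℝ (Fin d)) (hg : Continuous g)
    (Me Mo : Set (EuclideanSpace ℝ (Fin d)))
    (hMeClosed : IsClosed Me) (hMeInv : g '' Me ⊆ Me)
    (hMoSub : Mo ⊆ Me) (hMoCompact : IsCompact Mo)
    (hMoStable : StableRel g Me Mo)
    (B : Set (EuclideanSpace ℝ (Fin d)))
    (hB : B = {x ∈ Me | Tendsto (fun n : ℕ => infDist (g^[n] x) Mo) atTop (𝓝 0)})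
    (hMoAttr : ∃ δ > (0 : ℝ), ∀ x ∈ Me, infDist x Mo < δ → x ∈ B) :
    ∀ K : Set (EuclideanSpace ℝ (Fin d)), IsCompact K → K ⊆ B →
      ∀ ε > (0 : ℝ), ∃ N : ℕ, ∀ x ∈ K, ∀ n ≥ N, infDist (g^[n] x) Mo ≤ ε := by
  intro K hK hKB ε hε
  -- trivial case: Mo empty
  rcases Mo.eq_empty_or_nonempty with hMo | hMo
  · exact ⟨0, fun x _ n _ => by simp [hMo, Metric.infDist_empty, hε.le]⟩
  -- iterates stay in Me
  have hIter : ∀ (n : ℕ) (x), x ∈ Me → g^[n] x ∈ Me := by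
    intro n
    induction n with
    | zero => intro x hx; simpa using hx
    | succ n ih =>
      intro x hx
      rw [Function.iterate_succ_apply]
      exact ih _ (hMeInv ⟨x, hx, rfl⟩)
  obtain ⟨δa, hδa, hAttr⟩ := hMoAttr
  -- bound on norms of points of Mo
  obtain ⟨R, hR⟩ := hMoCompact.isBounded.subset_closedBall 0
  have hR' : ∀ y ∈ Mo, ‖y‖ ≤ R := fun y hy => by
    simpa [dist_eq_norm] using hR hy
  set Δ : ℝ := |R| + δa + 1 with hΔdef
  have hΔpos : 0 < Δ := by positivity
  obtain ⟨δ₁, hδ₁, hStab⟩ := hMoStable ε hε Δ hΔpos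
  set δ : ℝ := min δ₁ δa with hδdef
  have hδpos : 0 < δ := lt_min hδ₁ hδa
  -- any point with infDist < δ has norm < Δ
  have hnorm : ∀ x : EuclideanSpace ℝ (Fin d), infDist x Mo < δ → ‖x‖ < Δ := by
    intro x hx
    have hx' : infDist x Mo < δa := lt_of_lt_of_le hx (min_le_right _ _)
    obtain ⟨y, hy, hxy⟩ := (Metric.infDist_lt_iff hMo).1 hx'
    calc ‖x‖ ≤ dist x y + ‖y‖ := by
            simpa [dist_eq_norm, add_comm] using norm_le_insert' x y
      _ < δa + |R| := add_lt_add_of_lt_of_le hxy ((hR' y hy).trans (le_abs_self R))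
      _ < Δ := by rw [hΔdef]; linarith
  -- key: once close, forever ε-close
  have hKey : ∀ z ∈ Me, infDist z Mo < δ → ∀ n : ℕ, infDist (g^[n] z) Mo < ε := by
    intro z hz hzδ
    exact hStab z hz (lt_of_lt_of_le hzδ (min_le_left _ _)) (hnorm z hzδ)
  -- for each point in K pick a time when the orbit is δ-close
  have hex : ∀ x : K, ∃ N : ℕ, infDist (g^[N] (x : EuclideanSpace ℝ (Fin d))) Mo < δ := by
    rintro ⟨x, hx⟩
    have hxB := hKB hx
    rw [hB] at hxB
    exact (hxB.2.eventually (eventually_lt_nhds hδpos)).exists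
  choose N hN using hex
  set U : K → Set (EuclideanSpace ℝ (Fin d)) :=
    fun i => {y | infDist (g^[N i] y) Mo < δ} with hU
  have hUopen : ∀ i, IsOpen (U i) := by
    intro i
    have hc : Continuous fun y => infDist (g^[N i] y) Mo :=
      (continuous_infDist_pt Mo).comp (hg.iterate (N i))
    exact isOpen_lt hc continuous_const
  have hcov : K ⊆ ⋃ i, U i := fun x hx => Set.mem_iUnion.2 ⟨⟨x, hx⟩, hN ⟨x, hx⟩⟩
  obtain ⟨t, ht⟩ := hK.elim_finite_subcover U hUopen hcov
  refine ⟨t.sup N, fun x hx n hn => ?_⟩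
  obtain ⟨i, hit, hxU⟩ := Set.mem_iUnion₂.1 (ht hx)
  have hmN : N i ≤ t.sup N := Finset.le_sup hit
  have hxMe : x ∈ Me := by
    have := hKB hx; rw [hB] at this; exact this.1
  have hzMe : g^[N i] x ∈ Me := hIter _ _ hxMe
  have hall := hKey _ hzMe hxU
  have hmn : N i ≤ n := le_trans hmN hn
  have heq : g^[n] x = g^[n - N i] (g^[N i] x) := by
    rw [← Function.iterate_add_apply, Nat.sub_add_cancel hmn]
  rw [heq]
  exact (hall (n - N i)).le
end

section
/- Let g : ℝⁿ → ℝⁿ be continuous and consider the discrete-time system x⁺ = g(x). Suppose: (i) Mₑ ⊆ ℝⁿ is closed and forward invariant (g(Mₑ) ⊆ Mₑ); (ii) Mᵢ ⊆ Mₑ is closed, stable relative to Mₑ, and globally attractive relative to Mₑ; (iii) M∘ ⊆ Mᵢ is compact, stable relative to Mᵢ, and globally attractive relative to Mᵢ; (iv) for every compact K ⊆ Mₑ there exists Δ > 0 such that ‖g^[n](x)‖ < Δ for all x ∈ K and all n ∈ ℕ. Then there exists a class-KL function β : [0,∞) × ℕ → [0,∞) — i.e. for each fixed n, s ↦ β(s,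 n) is continuous, strictly increasing, and β(0, n) = 0, and for each fixed s, n ↦ β(s, n) is nonincreasing with β(s, n) → 0 as n → ∞ — such that dist(g^[n](x), M∘) ≤ β(dist(x, M∘), n) for all x ∈ Mₑ and all n ∈ ℕ. -/
/-!
Orbits starting in `Me` approach `Mi`, and a bounded backward orbit `y` inside `Mi` has `y 0 ∈ Mo`:
an accumulation point of `y` is attracted to `Mo`, and stability of `Mo` relative to `Mi` carries
this along the orbit to `y 0`. Limits of ever longer orbit segments ending at points far from
`Mo` would produce such backward orbits with `y 0 ∉ Mo`; this gives stability and global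
attractivity of `Mo` relative to `Me`. Compactness of `Mo` and of the sets
`{x ∈ Me | dist(x, Mo) ≤ s}` makes them uniform, so the worst-case distance
`W(s, n) = sup {dist(g^[j] x, Mo) | x ∈ Me, dist(x, Mo) ≤ s, j ≥ n}` is finite, nondecreasing in
`s`, nonincreasing in `n`, and tends to `0` as `n → ∞` and as `s → 0`. The average
`β(s, n) = (1/s) ∫_s^{2s} W(σ, n) dσ + s/(n+1)` is then a class-KL function above `W`.
-/

open Metric Filter Topology

open Set Function

structure IsClassKL (β : ℝ → ℕ → ℝ) : Prop where
  nonneg : ∀ s ∈ Ici (0 : ℝ), ∀ n : ℕ, 0 ≤ β s n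
  continuousOn : ∀ n : ℕ, ContinuousOn (fun s => β s n) (Ici 0)
  strictMonoOn : ∀ n : ℕ, StrictMonoOn (fun s => β s n) (Ici 0)
  map_zero : ∀ n : ℕ, β 0 n = 0
  antitone : ∀ s ∈ Ici (0 : ℝ), ∀ m n : ℕ, m ≤ n → β s n ≤ β s m
  tendsto_zero : ∀ s ∈ Ici (0 : ℝ), Tendsto (fun n : ℕ => β s n) atTop (𝓝 0)

-- Division by zero makes the value at `s = 0` equal to `0`.
noncomputable def dyadicAverage (f : ℝ → ℝ) (s : ℝ) : ℝ :=
  (∫ σ in s..2 * s, f σ) / s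

section dyadicAverage

open intervalIntegral

variable {f : ℝ → ℝ}

@[simp]
lemma dyadicAverage_zero (f : ℝ → ℝ) : dyadicAverage f 0 = 0 := by
  simp [dyadicAverage]

lemma dyadicAverage_eq_integral (f : ℝ → ℝ) {s : ℝ} (hs : s ≠ 0) :
    dyadicAverage f s = ∫ t in (1 : ℝ)..2, f (t * s) := by
  rw [integral_comp_mul_right f hs, one_mul, smul_eq_mul, dyadicAverage, div_eq_inv_mul]

lemma Monotone.intervalIntegrable_comp_mul (hf : Monotone f) {s : ℝ} (hs : 0 ≤ s) (a b : ℝ) :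
    IntervalIntegrable (fun t => f (t * s)) MeasureTheory.volume a b :=
  (hf.comp (monotone_mul_right_of_nonneg hs)).intervalIntegrable

lemma Monotone.le_dyadicAverage (hf : Monotone f) {s : ℝ} (hs : 0 < s) :
    f s ≤ dyadicAverage f s := by
  rw [dyadicAverage_eq_integral f hs.ne']
  calc f s = ∫ _ in (1 : ℝ)..2, f s := by norm_num
    _ ≤ _ := integral_mono_on one_le_two intervalIntegrable_const
      (hf.intervalIntegrable_comp_mul hs.le 1 2) fun t ht => hf (le_mul_of_one_le_left hs.le ht.1)

lemma Monotone.dyadicAverage_le (hf : Monotone f) {s : ℝ} (hs : 0 < s) :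
    dyadicAverage f s ≤ f (2 * s) := by
  rw [dyadicAverage_eq_integral f hs.ne']
  calc _ ≤ ∫ _ in (1 : ℝ)..2, f (2 * s) := integral_mono_on one_le_two
        (hf.intervalIntegrable_comp_mul hs.le 1 2) intervalIntegrable_const
        fun t ht => hf (mul_le_mul_of_nonneg_right ht.2 hs.le)
    _ = f (2 * s) := by norm_num

lemma dyadicAverage_le_dyadicAverage {g : ℝ → ℝ} (hf : Monotone f) (hg : Monotone g) {s : ℝ}
    (hs : 0 ≤ s) (hfg : ∀ σ ∈ Icc s (2 * s), f σ ≤ g σ) :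
    dyadicAverage f s ≤ dyadicAverage g s := by
  rcases hs.eq_or_lt with rfl | hs
  · simp
  rw [dyadicAverage_eq_integral f hs.ne', dyadicAverage_eq_integral g hs.ne']
  exact integral_mono_on one_le_two (hf.intervalIntegrable_comp_mul hs.le 1 2)
    (hg.intervalIntegrable_comp_mul hs.le 1 2) fun t ht =>
      hfg _ ⟨le_mul_of_one_le_left hs.le ht.1, mul_le_mul_of_nonneg_right ht.2 hs.le⟩

lemma Monotone.monotoneOn_dyadicAverage (hf : Monotone f) (hf0 : 0 ≤ f 0) :
    MonotoneOn (dyadicAverage f) (Ici 0) := by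
  intro a ha b hb hab
  rcases (mem_Ici.1 ha).eq_or_lt with rfl | ha
  · rcases (mem_Ici.1 hb).eq_or_lt with rfl | hb
    · rfl
    simpa using hf0.trans ((hf hb.le).trans (hf.le_dyadicAverage hb))
  rw [dyadicAverage_eq_integral f ha.ne', dyadicAverage_eq_integral f (ha.trans_le hab).ne']
  exact integral_mono_on one_le_two (hf.intervalIntegrable_comp_mul ha.le 1 2)
    (hf.intervalIntegrable_comp_mul (ha.le.trans hab) 1 2) fun t ht =>
      hf (mul_le_mul_of_nonneg_left hab (zero_le_one.trans ht.1))

lemma Monotone.continuousAt_dyadicAverage (hf : Monotone f) {s : ℝ} (hs : s ≠ 0) :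
    ContinuousAt (dyadicAverage f) s := by
  have hF := continuous_primitive (fun _ _ => hf.intervalIntegrable (μ := MeasureTheory.volume)) 0
  have hdiff : dyadicAverage f = fun s => ((∫ σ in 0..2 * s, f σ) - ∫ σ in 0..s, f σ) / s := by
    ext s
    rw [integral_interval_sub_left hf.intervalIntegrable hf.intervalIntegrable, dyadicAverage]
  rw [hdiff]
  exact (((hF.comp (continuous_const_mul 2)).sub hF).continuousAt).div continuousAt_id hs

end dyadicAverage

-- Averaging makes it continuous in `s`; the term `s / (n + 1)` makes it strictly increasing.
noncomputable def klMajorant (W : ℝ → ℕ → ℝ) (s : ℝ) (n : ℕ) : ℝ :=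
  dyadicAverage (W · n) s + s / (n + 1)

section klMajorant

variable {W : ℝ → ℕ → ℝ}

@[simp]
lemma klMajorant_zero_left (W : ℝ → ℕ → ℝ) (n : ℕ) : klMajorant W 0 n = 0 := by
  simp [klMajorant]

lemma strictMonoOn_klMajorant (hmono : ∀ n, Monotone (W · n)) (hnonneg : ∀ n, 0 ≤ W 0 n) (n : ℕ) :
    StrictMonoOn (klMajorant W · n) (Ici 0) := fun _ ha _ hb hab =>
  add_lt_add_of_le_of_lt ((hmono n).monotoneOn_dyadicAverage (hnonneg n) ha hb hab.le)
    (by gcongr)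

lemma klMajorant_nonneg (hmono : ∀ n, Monotone (W · n)) (hnonneg : ∀ n, 0 ≤ W 0 n) {s : ℝ}
    (hs : 0 ≤ s) (n : ℕ) : 0 ≤ klMajorant W s n := by
  simpa using (strictMonoOn_klMajorant hmono hnonneg n).monotoneOn self_mem_Ici hs hs

lemma klMajorant_le (hmono : ∀ n, Monotone (W · n)) (hnonneg : ∀ n, 0 ≤ W 0 n) {s : ℝ}
    (hs : 0 ≤ s) (n : ℕ) : klMajorant W s n ≤ W (2 * s) n + s / (n + 1) := by
  rcases hs.eq_or_lt with rfl | hs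
  · simpa using hnonneg n
  exact add_le_add ((hmono n).dyadicAverage_le hs) le_rfl

lemma le_klMajorant (hmono : ∀ n, Monotone (W · n)) (hanti : ∀ s, 0 ≤ s → Antitone (W s))
    (hzero : Tendsto (W · 0) (𝓝[≥] 0) (𝓝 0)) {s : ℝ} (hs : 0 ≤ s) (n : ℕ) :
    W s n ≤ klMajorant W s n := by
  rcases hs.eq_or_lt with rfl | hs
  · simpa using ge_of_tendsto hzero (eventually_nhdsWithin_of_forall fun σ hσ =>
      (hmono n hσ).trans (hanti σ hσ n.zero_le))
  exact ((hmono n).le_dyadicAverage hs).trans (le_add_of_nonneg_right (by positivity))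

lemma continuousOn_klMajorant (hmono : ∀ n, Monotone (W · n)) (hnonneg : ∀ n, 0 ≤ W 0 n)
    (hanti : ∀ s, 0 ≤ s → Antitone (W s)) (hzero : Tendsto (W · 0) (𝓝[≥] 0) (𝓝 0)) (n : ℕ) :
    ContinuousOn (klMajorant W · n) (Ici 0) := by
  intro s hs
  rcases (mem_Ici.1 hs).eq_or_lt with rfl | hs
  · have hdouble : Tendsto (2 * ·) (𝓝[≥] (0 : ℝ)) (𝓝[≥] 0) :=
      tendsto_nhdsWithin_of_tendsto_nhds_of_eventually_within _
        (by simpa using (continuous_const_mul (2 : ℝ)).tendsto 0 |>.mono_left nhdsWithin_le_nhds)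
        (eventually_nhdsWithin_of_forall fun s hs => by simpa using hs)
    have hupper (s : ℝ) (hs : 0 ≤ s) : klMajorant W s n ≤ W (2 * s) 0 + s :=
      (klMajorant_le hmono hnonneg hs n).trans (add_le_add (hanti _ (by positivity) n.zero_le)
        (div_le_self hs (by simp)))
    rw [ContinuousWithinAt, klMajorant_zero_left]
    refine squeeze_zero'
      (eventually_nhdsWithin_of_forall fun _ hs => klMajorant_nonneg hmono hnonneg hs n)
      (eventually_nhdsWithin_of_forall hupper) ?_
    simpa using (hzero.comp hdouble).add (tendsto_id.mono_left nhdsWithin_le_nhds)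
  exact (((hmono n).continuousAt_dyadicAverage hs.ne').add
    (continuousAt_id.div_const _)).continuousWithinAt

theorem isClassKL_klMajorant (hmono : ∀ n, Monotone (W · n)) (hnonneg : ∀ n, 0 ≤ W 0 n)
    (hanti : ∀ s, 0 ≤ s → Antitone (W s)) (hlim : ∀ s, 0 ≤ s → Tendsto (W s) atTop (𝓝 0))
    (hzero : Tendsto (W · 0) (𝓝[≥] 0) (𝓝 0)) : IsClassKL (klMajorant W) where
  nonneg _ hs := klMajorant_nonneg hmono hnonneg hs
  continuousOn := continuousOn_klMajorant hmono hnonneg hanti hzero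
  strictMonoOn := strictMonoOn_klMajorant hmono hnonneg
  map_zero := klMajorant_zero_left W
  antitone s hs m n hmn := add_le_add (dyadicAverage_le_dyadicAverage (hmono n) (hmono m) hs
    fun σ hσ => hanti σ (hs.trans hσ.1) hmn) (by gcongr)
  tendsto_zero s hs := squeeze_zero (klMajorant_nonneg hmono hnonneg hs)
    (klMajorant_le hmono hnonneg hs) <| by
      simpa [div_eq_mul_inv] using (hlim (2 * s) (mul_nonneg zero_le_two hs)).add
        (tendsto_one_div_add_atTop_nhds_zero_nat.const_mul s)

end klMajorant

def UniformlyBoundedOrbitsOn {E : Type*} [SeminormedAddCommGroup E] (g : E → E) (S : Set E) :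
    Prop :=
  ∀ K : Set E, IsCompact K → K ⊆ S → ∃ Δ > (0 : ℝ), ∀ x ∈ K, ∀ n : ℕ, ‖g^[n] x‖ < Δ

lemma UniformlyBoundedOrbitsOn.mono {E : Type*} [SeminormedAddCommGroup E] {g : E → E} {S T : Set E}
    (h : UniformlyBoundedOrbitsOn g T) (hST : S ⊆ T) : UniformlyBoundedOrbitsOn g S :=
  fun K hK hKS => h K hK (hKS.trans hST)

noncomputable def orbitDists {α : Type*} [PseudoMetricSpace α] (g : α → α) (Y X : Set α)
    (s : ℝ) (n : ℕ) : Set ℝ :=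
  image2 (fun x j => infDist (g^[j] x) X) {x ∈ Y | infDist x X ≤ s} (Ici n)

noncomputable def orbitDistSup {α : Type*} [PseudoMetricSpace α] (g : α → α) (Y X : Set α)
    (s : ℝ) (n : ℕ) : ℝ :=
  sSup (orbitDists g Y X s n)

section orbitDistSup

variable {α : Type*} [PseudoMetricSpace α] {g : α → α} {Y X : Set α}

lemma orbitDistSup_nonneg (g : α → α) (Y X : Set α) (s : ℝ) (n : ℕ) :
    0 ≤ orbitDistSup g Y X s n :=
  Real.sSup_nonneg (forall_mem_image2.2 fun _ _ _ _ => infDist_nonneg)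

lemma infDist_iterate_le_orbitDistSup {s : ℝ} {n j : ℕ} (hB : BddAbove (orbitDists g Y X s n))
    {x : α} (hx : x ∈ Y) (hxs : infDist x X ≤ s) (hj : n ≤ j) :
    infDist (g^[j] x) X ≤ orbitDistSup g Y X s n :=
  le_csSup hB (mem_image2_of_mem ⟨hx, hxs⟩ hj)

lemma orbitDistSup_le {s ε : ℝ} {n : ℕ} (hε : 0 ≤ ε)
    (h : ∀ x ∈ Y, infDist x X ≤ s → ∀ j ≥ n, infDist (g^[j] x) X ≤ ε) :
    orbitDistSup g Y X s n ≤ ε :=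
  Real.sSup_le (forall_mem_image2.2 fun x hx j hj => h x hx.1 hx.2 j hj) hε

lemma orbitDistSup_le_orbitDistSup {s s' : ℝ} {n n' : ℕ} (hs : s ≤ s') (hn : n' ≤ n)
    (hB : BddAbove (orbitDists g Y X s' n')) :
    orbitDistSup g Y X s n ≤ orbitDistSup g Y X s' n' :=
  orbitDistSup_le (orbitDistSup_nonneg g Y X s' n') fun _ hx hxs _ hj =>
    infDist_iterate_le_orbitDistSup hB hx (hxs.trans hs) (hn.trans hj)

lemma isCompact_setOf_infDist_le [ProperSpace α] (hY : IsClosed Y) (hX : Bornology.IsBounded X)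
    (hXne : X.Nonempty) (s : ℝ) : IsCompact {x ∈ Y | infDist x X ≤ s} :=
  isCompact_of_isClosed_isBounded
    (hY.inter (isClosed_le (continuous_infDist_pt X) continuous_const))
    ((hX.thickening (δ := s + 1)).subset fun _ hx =>
      (mem_thickening_iff_infDist_lt hXne).2 (hx.2.trans_lt (lt_add_one s)))

end orbitDistSup

lemma bddAbove_orbitDists {E : Type*} [SeminormedAddCommGroup E] [ProperSpace E] {g : E → E}
    {Y X : Set E} (hY : IsClosed Y) (hX : Bornology.IsBounded X) (hXne : X.Nonempty)
    (hbdd : UniformlyBoundedOrbitsOn g Y) (s : ℝ) (n : ℕ) : BddAbove (orbitDists g Y X s n) := by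
  obtain ⟨Δ, -, hΔ⟩ := hbdd _ (isCompact_setOf_infDist_le hY hX hXne s) (sep_subset _ _)
  obtain ⟨x₀, hx₀⟩ := hXne
  refine ⟨Δ + ‖x₀‖, forall_mem_image2.2 fun x hx j _ => ?_⟩
  calc infDist (g^[j] x) X ≤ dist (g^[j] x) x₀ := infDist_le_dist_of_mem hx₀
    _ ≤ ‖g^[j] x‖ + ‖x₀‖ := dist_le_norm_add_norm _ _
    _ ≤ Δ + ‖x₀‖ := by grw [hΔ x hx j]

theorem exists_backward_orbit_limit {X : Type*} [TopologicalSpace X] [T2Space X]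
    [FirstCountableTopology X] {g : X → X} (hg : Continuous g) {C : Set X} (hC : IsCompact C)
    {xs : ℕ → X} {N : ℕ → ℕ} (hN : Tendsto N atTop atTop) (hxs : ∀ k j, g^[j] (xs k) ∈ C) :
    ∃ y : ℕ → X, ∃ φ : ℕ → ℕ, StrictMono φ ∧ (∀ m, y m ∈ C) ∧ (∀ m, g (y (m + 1)) = y m) ∧
      ∀ m, Tendsto (fun i => g^[N (φ i) - m] (xs (φ i))) atTop (𝓝 (y m)) := by
  obtain ⟨y, hyC, φ, hφ, hlim⟩ := (isCompact_univ_pi fun _ : ℕ => hC).tendsto_subseq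
    (x := fun k m => g^[N k - m] (xs k)) fun k m _ => hxs k _
  have hlim' := tendsto_pi_nhds.1 hlim
  refine ⟨y, φ, hφ, fun m => hyC m trivial, fun m => tendsto_nhds_unique ?_ (hlim' m), hlim'⟩
  refine ((hg.tendsto _).comp (hlim' (m + 1))).congr' ?_
  filter_upwards [(hN.comp hφ.tendsto_atTop).eventually_ge_atTop (m + 1)] with i hi
  rw [comp_apply] at hi
  show g (g^[_] _) = _
  rw [← iterate_succ_apply' g]
  congr 2
  omega

theorem tendsto_atTop_of_le_infDist_iterate {α : Type*} [PseudoMetricSpace α] {g : α → α}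
    (hg : Continuous g) {X : Set α} {x₀ : α} (hx₀ : ∀ m, g^[m] x₀ ∈ X) {xs : ℕ → α}
    (hlim : Tendsto xs atTop (𝓝 x₀)) {ε : ℝ} (hε : 0 < ε) {n : ℕ → ℕ}
    (hn : ∀ k, ε ≤ infDist (g^[n k] (xs k)) X) : Tendsto n atTop atTop := by
  refine tendsto_atTop.2 fun b => ?_
  have hnear : ∀ᶠ k in atTop, ∀ m ∈ Finset.range b, infDist (g^[m] (xs k)) X < ε :=
    (eventually_all_finset _).2 fun m _ =>
      ((((continuous_infDist_pt X).comp (hg.iterate m)).tendsto x₀).comp hlim).eventually_lt_const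
        (by simpa [infDist_zero_of_mem (hx₀ m)] using hε)
  filter_upwards [hnear] with k hk
  by_contra! hlt
  exact (hk _ (Finset.mem_range.2 hlt)).not_ge (hn k)

section Euclidean

variable {d : ℕ} {g : EuclideanSpace ℝ (Fin d) → EuclideanSpace ℝ (Fin d)}
  {Y X : Set (EuclideanSpace ℝ (Fin d))}

lemma StableRel.mapsTo (hst : StableRel g Y X) (hXY : X ⊆ Y) (hX : IsClosed X) :
    MapsTo g X X := by
  intro x hx
  rw [hX.mem_iff_infDist_zero ⟨x, hx⟩]
  refine le_antisymm (le_of_forall_gt_imp_ge_of_dense fun ε hε => ?_) infDist_nonneg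
  obtain ⟨δ, hδ, hstab⟩ := hst ε hε (‖x‖ + 1) (by positivity)
  simpa using (hstab x (hXY hx) (by simpa [infDist_zero_of_mem hx]) (lt_add_one _) 1).le

lemma StableRel.tendsto_infDist_iterate_s7 (hst : StableRel g Y X) {ι : Type*} {l : Filter ι}
    {xs : ι → EuclideanSpace ℝ (Fin d)} (hY : ∀ i, xs i ∈ Y) {R : ℝ} (hR : ∀ i, ‖xs i‖ ≤ R)
    (hX : Tendsto (fun i => infDist (xs i) X) l (𝓝 0)) (t : ι → ℕ) :
    Tendsto (fun i => infDist (g^[t i] (xs i)) X) l (𝓝 0) := by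
  refine tendsto_order.2
    ⟨fun a ha => Eventually.of_forall fun i => ha.trans_le infDist_nonneg, fun ε hε => ?_⟩
  obtain ⟨δ, hδ, hstab⟩ := hst ε hε (|R| + 1) (by positivity)
  filter_upwards [hX.eventually_lt_const hδ] with i hi
  exact hstab _ (hY i) hi ((hR i).trans_lt ((le_abs_self R).trans_lt (lt_add_one _))) _

lemma StableRel.exists_forall_infDist_lt (hst : StableRel g Y X) (hX : Bornology.IsBounded X)
    (hXne : X.Nonempty) {ε : ℝ} (hε : 0 < ε) :
    ∃ δ > 0, ∀ x ∈ Y, infDist x X < δ → ∀ n, infDist (g^[n] x) X < ε := by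
  obtain ⟨R, hR⟩ := (hX.thickening (δ := 1)).subset_ball 0
  obtain ⟨δ, hδ, hstab⟩ :=
    hst ε hε R (pos_of_mem_ball (hR (self_subset_thickening one_pos X hXne.some_mem)))
  refine ⟨min δ 1, by positivity, fun x hx hxX => hstab x hx (hxX.trans_le (min_le_left _ _)) ?_⟩
  simpa using hR ((mem_thickening_iff_infDist_lt hXne).2 (hxX.trans_le (min_le_right _ _)))

theorem exists_forall_ge_infDist_iterate_lt (hg : Continuous g) (hYinv : MapsTo g Y Y)
    (hst : StableRel g Y X) (hattr : GloballyAttractiveRel g Y X) (hX : Bornology.IsBounded X)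
    (hXne : X.Nonempty) {K : Set (EuclideanSpace ℝ (Fin d))} (hK : IsCompact K) (hKY : K ⊆ Y)
    {ε : ℝ} (hε : 0 < ε) : ∃ N, ∀ x ∈ K, ∀ n ≥ N, infDist (g^[n] x) X < ε := by
  obtain ⟨δ, hδ, hstab⟩ := hst.exists_forall_infDist_lt hX hXne hε
  obtain ⟨t, ht⟩ := hK.elim_finite_subcover (fun N => {z | infDist (g^[N] z) X < δ})
    (fun N => isOpen_lt ((continuous_infDist_pt X).comp (hg.iterate N)) continuous_const)
    fun x hx => mem_iUnion.2 ((hattr x (hKY hx)).eventually_lt_const hδ).exists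
  refine ⟨t.sup id, fun x hx n hn => ?_⟩
  obtain ⟨N, hNt, hxN⟩ := mem_iUnion₂.1 (ht hx)
  have hNn : N ≤ n := (Finset.le_sup (f := id) hNt).trans hn
  simpa [← iterate_add_apply, Nat.sub_add_cancel hNn] using
    hstab _ (hYinv.iterate N (hKY hx)) hxN (n - N)

lemma tendsto_orbitDistSup_atTop (hg : Continuous g) (hY : IsClosed Y) (hYinv : MapsTo g Y Y)
    (hst : StableRel g Y X) (hattr : GloballyAttractiveRel g Y X) (hX : Bornology.IsBounded X)
    (hXne : X.Nonempty) (s : ℝ) : Tendsto (orbitDistSup g Y X s) atTop (𝓝 0) := by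
  refine tendsto_order.2 ⟨fun a ha => Eventually.of_forall fun n =>
    ha.trans_le (orbitDistSup_nonneg g Y X s n), fun ε hε => ?_⟩
  obtain ⟨N, hN⟩ := exists_forall_ge_infDist_iterate_lt hg hYinv hst hattr hX hXne
    (isCompact_setOf_infDist_le hY hX hXne s) (sep_subset _ _) (half_pos hε)
  filter_upwards [eventually_ge_atTop N] with n hn
  exact (orbitDistSup_le (half_pos hε).le fun x hx hxs j hj => (hN x ⟨hx, hxs⟩ j (hn.trans hj)).le)
    |>.trans_lt (half_lt_self hε)

lemma tendsto_orbitDistSup_nhdsGE_zero (hst : StableRel g Y X) (hX : Bornology.IsBounded X)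
    (hXne : X.Nonempty) : Tendsto (orbitDistSup g Y X · 0) (𝓝[≥] 0) (𝓝 0) := by
  refine tendsto_order.2 ⟨fun a ha => Eventually.of_forall fun s =>
    ha.trans_le (orbitDistSup_nonneg g Y X s 0), fun ε hε => ?_⟩
  obtain ⟨δ, hδ, hstab⟩ := hst.exists_forall_infDist_lt hX hXne (half_pos hε)
  filter_upwards [nhdsWithin_le_nhds (eventually_lt_nhds hδ)] with s hs
  exact (orbitDistSup_le (half_pos hε).le fun x hx hxs j _ => (hstab x hx (hxs.trans_lt hs) j).le)
    |>.trans_lt (half_lt_self hε)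

theorem exists_isClassKL_bound (hg : Continuous g) (hY : IsClosed Y) (hYinv : MapsTo g Y Y)
    (hbdd : UniformlyBoundedOrbitsOn g Y) (hX : Bornology.IsBounded X) (hXne : X.Nonempty)
    (hst : StableRel g Y X) (hattr : GloballyAttractiveRel g Y X) :
    ∃ β, IsClassKL β ∧ ∀ x ∈ Y, ∀ n, infDist (g^[n] x) X ≤ β (infDist x X) n := by
  have hB := bddAbove_orbitDists hY hX hXne hbdd
  have hmono (n : ℕ) : Monotone (orbitDistSup g Y X · n) := fun _ s' hs =>
    orbitDistSup_le_orbitDistSup hs le_rfl (hB s' n)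
  have hanti (s : ℝ) : Antitone (orbitDistSup g Y X s) := fun m _ hm =>
    orbitDistSup_le_orbitDistSup le_rfl hm (hB s m)
  have hzero := tendsto_orbitDistSup_nhdsGE_zero hst hX hXne
  refine ⟨klMajorant (orbitDistSup g Y X), isClassKL_klMajorant hmono
    (orbitDistSup_nonneg g Y X 0) (fun s _ => hanti s)
    (fun s _ => tendsto_orbitDistSup_atTop hg hY hYinv hst hattr hX hXne s) hzero,
    fun x hx n => ?_⟩
  exact (infDist_iterate_le_orbitDistSup (hB _ n) hx le_rfl le_rfl).trans
    (le_klMajorant hmono (fun s _ => hanti s) hzero infDist_nonneg n)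

theorem infDist_eq_zero_of_backward_orbit_s7 (hg : Continuous g) (hY : IsClosed Y)
    (hYinv : MapsTo g Y Y) (hbdd : UniformlyBoundedOrbitsOn g Y) (hst : StableRel g Y X)
    (hattr : GloballyAttractiveRel g Y X) {y : ℕ → EuclideanSpace ℝ (Fin d)}
    (hy : ∀ m, g (y (m + 1)) = y m) (hyY : ∀ m, y m ∈ Y) {R : ℝ} (hyR : ∀ m, ‖y m‖ ≤ R) :
    infDist (y 0) X = 0 := by
  have hiter (j : ℕ) : g^[j] (y j) = y 0 := by
    induction j with
    | zero => rfl
    | succ j ih => rw [iterate_succ_apply, hy, ih]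
  have hK : IsCompact (Y ∩ closedBall 0 R) := (isCompact_closedBall 0 R).inter_left hY
  have hyK (m : ℕ) : y m ∈ Y ∩ closedBall 0 R := ⟨hyY m, mem_closedBall_zero_iff.2 (hyR m)⟩
  obtain ⟨Δ, hΔ, hbound⟩ := hbdd _ hK inter_subset_left
  obtain ⟨w, hwK, φ, hφ, hlim⟩ := hK.tendsto_subseq hyK
  refine le_antisymm (le_of_forall_gt_imp_ge_of_dense fun ε hε => ?_) infDist_nonneg
  -- An accumulation point `w` of `y` gets `δ`-close to `X` at some time `m₀`; by continuity so
  -- do the points `y (φ i)`, and stability carries this over the remaining `φ i - m₀` steps to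
  -- `y 0 = g^[φ i] (y (φ i))`.
  obtain ⟨δ, hδ, hstab⟩ := hst ε hε Δ hΔ
  obtain ⟨m₀, hm₀⟩ := ((hattr w hwK.1).eventually_lt_const hδ).exists
  have hnear := ((((continuous_infDist_pt X).comp (hg.iterate m₀)).tendsto w).comp hlim)
    |>.eventually_lt_const hm₀
  obtain ⟨i, hi, him₀⟩ := (hnear.and (eventually_ge_atTop m₀)).exists
  have := hstab _ (hYinv.iterate m₀ (hyY (φ i))) hi (hbound _ (hyK _) m₀) (φ i - m₀)
  rw [← iterate_add_apply, Nat.sub_add_cancel (him₀.trans (hφ.id_le i)), hiter] at this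
  exact this.le

theorem exists_infDist_iterate_lt (hg : Continuous g) (hY : IsClosed Y) (hYne : Y.Nonempty)
    (hYinv : MapsTo g Y Y) (hbdd : UniformlyBoundedOrbitsOn g Y) (hst : StableRel g Y X)
    (hattr : GloballyAttractiveRel g Y X) {xs : ℕ → EuclideanSpace ℝ (Fin d)} {N : ℕ → ℕ}
    (hN : Tendsto N atTop atTop) {R : ℝ} (hR : ∀ k j, ‖g^[j] (xs k)‖ ≤ R)
    (hxsY : ∀ m, Tendsto (fun k => infDist (g^[N k - m] (xs k)) Y) atTop (𝓝 0))
    {ε : ℝ} (hε : 0 < ε) : ∃ k, infDist (g^[N k] (xs k)) X < ε := by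
  by_contra! hfar
  obtain ⟨y, φ, hφ, hyR, hy, hlim⟩ := exists_backward_orbit_limit hg
    (isCompact_closedBall 0 R) hN fun k j => mem_closedBall_zero_iff.2 (hR k j)
  have hyY (m : ℕ) : y m ∈ Y := (hY.mem_iff_infDist_zero hYne).2 <| tendsto_nhds_unique
    (((continuous_infDist_pt Y).tendsto _).comp (hlim m)) ((hxsY m).comp hφ.tendsto_atTop)
  have hy0 : ε ≤ infDist (y 0) X := ge_of_tendsto
    (((continuous_infDist_pt X).tendsto _).comp (hlim 0))
    (Eventually.of_forall fun i => by simpa using hfar (φ i))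
  have := infDist_eq_zero_of_backward_orbit_s7 hg hY hYinv hbdd hst hattr hy hyY
    fun m => mem_closedBall_zero_iff.1 (hyR m)
  linarith

variable {Me Mi Mo : Set (EuclideanSpace ℝ (Fin d))}

theorem StableRel.of_nested (hg : Continuous g) (hMeClosed : IsClosed Me)
    (hbdd : UniformlyBoundedOrbitsOn g Me) (hMiSub : Mi ⊆ Me) (hMiClosed : IsClosed Mi)
    (hMiStable : StableRel g Me Mi) (hMoSub : Mo ⊆ Mi) (hMoClosed : IsClosed Mo)
    (hMoNe : Mo.Nonempty) (hMoStable : StableRel g Mi Mo)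
    (hMoAttr : GloballyAttractiveRel g Mi Mo) :
    StableRel g Me Mo := by
  intro ε hε Δ hΔ
  by_contra! hbad
  choose x hxMe hxMo hxΔ n hn using fun k : ℕ => hbad (1 / (k + 1)) Nat.one_div_pos_of_nat
  have hK : IsCompact (Me ∩ closedBall 0 Δ) := (isCompact_closedBall 0 Δ).inter_left hMeClosed
  have hxK (k : ℕ) : x k ∈ Me ∩ closedBall 0 Δ := ⟨hxMe k, mem_closedBall_zero_iff.2 (hxΔ k).le⟩
  obtain ⟨x₀, -, ψ, hψ, hlim⟩ := hK.tendsto_subseq hxK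
  have hdist : Tendsto (fun j => infDist (x (ψ j)) Mo) atTop (𝓝 0) :=
    squeeze_zero (fun _ => infDist_nonneg) (fun j => (hxMo (ψ j)).le)
      (tendsto_one_div_add_atTop_nhds_zero_nat.comp hψ.tendsto_atTop)
  have hx₀ : x₀ ∈ Mo := (hMoClosed.mem_iff_infDist_zero hMoNe).2 <| tendsto_nhds_unique
    (((continuous_infDist_pt Mo).tendsto x₀).comp hlim) hdist
  have hN := tendsto_atTop_of_le_infDist_iterate hg
    (fun m => (hMoStable.mapsTo hMoSub hMoClosed).iterate m hx₀) hlim hε fun j => hn (ψ j)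
  obtain ⟨R, -, hR⟩ := hbdd _ hK inter_subset_left
  have hdistMi : Tendsto (fun j => infDist (x (ψ j)) Mi) atTop (𝓝 0) :=
    squeeze_zero (fun _ => infDist_nonneg)
      (fun _ => infDist_le_infDist_of_subset hMoSub hMoNe) hdist
  obtain ⟨j, hj⟩ := exists_infDist_iterate_lt hg hMiClosed (hMoNe.mono hMoSub)
    (hMiStable.mapsTo hMiSub hMiClosed) (hbdd.mono hMiSub) hMoStable hMoAttr hN
    (fun j i => (hR _ (hxK (ψ j)) i).le)
    (fun _ => hMiStable.tendsto_infDist_iterate_s7 (fun j => hxMe (ψ j)) (fun j => (hxΔ (ψ j)).le)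
      hdistMi _) hε
  exact (hn (ψ j)).not_gt hj

theorem GloballyAttractiveRel.of_nested (hg : Continuous g) (hbdd : UniformlyBoundedOrbitsOn g Me)
    (hMiSub : Mi ⊆ Me) (hMiClosed : IsClosed Mi) (hMiNe : Mi.Nonempty)
    (hMiStable : StableRel g Me Mi) (hMiAttr : GloballyAttractiveRel g Me Mi)
    (hMoStable : StableRel g Mi Mo) (hMoAttr : GloballyAttractiveRel g Mi Mo) :
    GloballyAttractiveRel g Me Mo := by
  intro x hx
  refine tendsto_order.2
    ⟨fun a ha => Eventually.of_forall fun n => ha.trans_le infDist_nonneg, fun ε hε => ?_⟩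
  by_contra hfreq
  obtain ⟨φ, hφ, hfar⟩ := extraction_of_frequently_atTop (not_eventually.1 hfreq)
  obtain ⟨R, -, hR⟩ := hbdd {x} isCompact_singleton (singleton_subset_iff.2 hx)
  obtain ⟨k, hk⟩ := exists_infDist_iterate_lt hg hMiClosed hMiNe
    (hMiStable.mapsTo hMiSub hMiClosed) (hbdd.mono hMiSub) hMoStable hMoAttr (xs := fun _ => x)
    hφ.tendsto_atTop (fun _ j => (hR x rfl j).le)
    (fun m => (hMiAttr x hx).comp ((tendsto_sub_atTop_nat m).comp hφ.tendsto_atTop)) hε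
  exact hfar k hk

end Euclidean

theorem hierarchical_KL_bound_discrete {d : ℕ}
    (g : EuclideanSpace ℝ (Fin d) → EuclideanSpace ℝ (Fin d)) (hg : Continuous g)
    (Me Mi Mo : Set (EuclideanSpace ℝ (Fin d)))
    (hMeClosed : IsClosed Me) (hMeInv : g '' Me ⊆ Me)
    (hMiSub : Mi ⊆ Me) (hMiClosed : IsClosed Mi)
    (hMiStable : StableRel g Me Mi) (hMiAttr : GloballyAttractiveRel g Me Mi)
    (hMoSub : Mo ⊆ Mi) (hMoCompact : IsCompact Mo)
    (hMoStable : StableRel g Mi Mo) (hMoAttr : GloballyAttractiveRel g Mi Mo)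
    (hUGB : ∀ K : Set (EuclideanSpace ℝ (Fin d)), IsCompact K → K ⊆ Me →
      ∃ Δ > (0 : ℝ), ∀ x ∈ K, ∀ n : ℕ, ‖g^[n] x‖ < Δ) :
    ∃ β : ℝ → ℕ → ℝ,
      (∀ s ∈ Set.Ici (0 : ℝ), ∀ n : ℕ, 0 ≤ β s n) ∧
      (∀ n : ℕ, ContinuousOn (fun s => β s n) (Set.Ici (0 : ℝ))) ∧
      (∀ n : ℕ, StrictMonoOn (fun s => β s n) (Set.Ici (0 : ℝ))) ∧
      (∀ n : ℕ, β 0 n = 0) ∧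
      (∀ s ∈ Set.Ici (0 : ℝ), ∀ m n : ℕ, m ≤ n → β s n ≤ β s m) ∧
      (∀ s ∈ Set.Ici (0 : ℝ), Tendsto (fun n : ℕ => β s n) atTop (𝓝 0)) ∧
      (∀ x ∈ Me, ∀ n : ℕ, infDist (g^[n] x) Mo ≤ β (infDist x Mo) n) := by
  obtain ⟨β, hβ, hbound⟩ :
      ∃ β, IsClassKL β ∧ ∀ x ∈ Me, ∀ n, infDist (g^[n] x) Mo ≤ β (infDist x Mo) n := by
    rcases Mo.eq_empty_or_nonempty with rfl | hMo
    -- `infDist x ∅ = 0`, so any class-KL function will do.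
    · refine ⟨klMajorant fun _ _ => 0, isClassKL_klMajorant (fun _ => monotone_const)
        (fun _ => le_rfl) (fun _ _ => antitone_const) (fun _ _ => tendsto_const_nhds)
        tendsto_const_nhds, fun _ _ n => by simp⟩
    exact exists_isClassKL_bound hg hMeClosed (mapsTo_iff_image_subset.2 hMeInv) hUGB
      hMoCompact.isBounded hMo
      (hMiStable.of_nested hg hMeClosed hUGB hMiSub hMiClosed hMoSub hMoCompact.isClosed hMo
        hMoStable hMoAttr)
      (hMiAttr.of_nested hg hUGB hMiSub hMiClosed (hMo.mono hMoSub) hMiStable hMoStable hMoAttr)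
  exact ⟨β, hβ.nonneg, hβ.continuousOn, hβ.strictMonoOn, hβ.map_zero, hβ.antitone,
    hβ.tendsto_zero, hbound⟩
end

section
/- Let g₁ : ℝᵐ → ℝᵐ and g₂ : ℝᵐ × ℝᵏ → ℝᵏ be continuous, and consider the discrete-time cascade (x₁⁺, x₂⁺) = G(x₁, x₂) := (g₁(x₁), g₂(x₁, x₂)). Suppose the origin 0 ∈ ℝᵐ is stable and globally attractive for the upper subsystem x₁⁺ = g₁(x₁), and the origin 0 ∈ ℝᵏ is stable and globally attractive for the zero-input lower subsystem x₂⁺ = g₂(0, x₂). Then the origin (0,0) ∈ ℝᵐ × ℝᵏ is stable for the cascade, and every point (x₁, x₂) whose orbit (G^[n](x₁, x₂))_{n ∈ ℕ} is bounded satisfies G^[n](x₁, x₂) → (0,0) as n → ∞. -/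
open Metric Filter Topology


namespace CascadeAux

variable {U Z : Type*} [NormedAddCommGroup U] [NormedAddCommGroup Z]

/-- Trajectory of the driven lower subsystem. -/
def traj (g₂ : U × Z → Z) (u : ℕ → U) (z : Z) : ℕ → Z
  | 0 => z
  | n + 1 => g₂ (u n, traj g₂ u z n)

lemma traj_shift (g₂ : U × Z → Z) (u : ℕ → U) (z : Z) (n j : ℕ) :
    traj g₂ u z (n + j) = traj g₂ (fun i => u (i + n)) (traj g₂ u z n) j := by
  induction j with
  | zero => rfl
  | succ j ih =>
      show traj g₂ u z ((n + j) + 1) = _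
      rw [traj, traj, ih, Nat.add_comm j n]

variable [ProperSpace U] [ProperSpace Z]
set_option linter.unusedSectionVars false

/-- Iterates of a continuous map on a compact set are uniformly bounded up to a finite horizon. -/
lemma bound_iter (h : Z → Z) (hh : Continuous h) (K : Set Z) (hK : IsCompact K) (N : ℕ) :
    ∃ M : ℝ, ∀ z ∈ K, ∀ j ≤ N, ‖h^[j] z‖ ≤ M := by
  induction N with
  | zero =>
      obtain ⟨r, hr⟩ := hK.isBounded.subset_closedBall 0
      exact ⟨r, fun z hz j hj => by
        interval_cases j
        simpa [mem_closedBall, dist_zero_right] using hr hz⟩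
  | succ N ih =>
      obtain ⟨M, hM⟩ := ih
      obtain ⟨r, hr⟩ := ((hK.image (hh.iterate (N + 1))).isBounded).subset_closedBall 0
      refine ⟨max M r, fun z hz j hj => ?_⟩
      rcases Nat.lt_succ_iff_lt_or_eq.mp (Nat.lt_succ_of_le hj) with hj' | rfl
      · exact le_max_of_le_left (hM z hz j (Nat.lt_succ_iff.mp hj'))
      · exact le_max_of_le_right (by
          simpa [mem_closedBall, dist_zero_right] using hr ⟨z, hz, rfl⟩)

/-- Finite-horizon robustness: trajectories with small inputs stay close to the
zero-input iterates, uniformly over a compact set of initial conditions. -/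
lemma FHU (g₂ : U × Z → Z) (hg₂ : Continuous g₂) (K : Set Z) (hK : IsCompact K) (N : ℕ) :
    ∀ α > (0 : ℝ), ∃ ρ > (0 : ℝ), ∀ z ∈ K, ∀ u : ℕ → U, (∀ i, ‖u i‖ < ρ) →
      ∀ j ≤ N, ‖traj g₂ u z j - (fun y => g₂ (0, y))^[j] z‖ < α := by
  set h : Z → Z := fun y => g₂ (0, y) with hh_def
  have hh : Continuous h := hg₂.comp (continuous_const.prodMk continuous_id)
  induction N with
  | zero =>
      intro α hα
      exact ⟨1, one_pos, fun z hz u hu j hj => by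
        interval_cases j
        simpa [traj] using hα⟩
  | succ N ih =>
      intro α hα
      obtain ⟨M, hM⟩ := bound_iter h hh K hK N
      -- uniform continuity of g₂ on a compact product set
      set D : Set (U × Z) := closedBall 0 1 ×ˢ closedBall 0 (M + 1) with hD_def
      have hDc : IsCompact D := (isCompact_closedBall 0 1).prod (isCompact_closedBall 0 (M + 1))
      have huc := Metric.uniformContinuousOn_iff.mp
        (hDc.uniformContinuousOn_of_continuous hg₂.continuousOn) α hα
      obtain ⟨β, hβ, hβ'⟩ := huc
      set α' := min (min α β) 1 with hα'_def
      have hα'pos : 0 < α' := lt_min (lt_min hα hβ) one_pos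
      obtain ⟨ρ, hρ, hρ'⟩ := ih α' hα'pos
      refine ⟨min ρ (min β 1), lt_min hρ (lt_min hβ one_pos), fun z hz u hu j hj => ?_⟩
      have hu' : ∀ i, ‖u i‖ < ρ := fun i => lt_of_lt_of_le (hu i) (min_le_left _ _)
      have huβ : ∀ i, ‖u i‖ < β := fun i =>
        lt_of_lt_of_le (hu i) (le_trans (min_le_right _ _) (min_le_left _ _))
      have hu1 : ∀ i, ‖u i‖ ≤ 1 := fun i =>
        le_of_lt (lt_of_lt_of_le (hu i) (le_trans (min_le_right _ _) (min_le_right _ _)))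
      rcases Nat.lt_succ_iff_lt_or_eq.mp (Nat.lt_succ_of_le hj) with hj' | rfl
      · exact lt_of_lt_of_le (hρ' z hz u hu' j (Nat.lt_succ_iff.mp hj'))
          (le_trans (min_le_left _ _) (min_le_left _ _))
      · -- j = N + 1
        have hdev : ‖traj g₂ u z N - h^[N] z‖ < α' := hρ' z hz u hu' N le_rfl
        have hNK : ‖h^[N] z‖ ≤ M := hM z hz N le_rfl
        have hx : (u N, traj g₂ u z N) ∈ D := by
          constructor
          · simpa [mem_closedBall, dist_zero_right] using hu1 N
          · simp only [mem_closedBall, dist_zero_right]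
            have h2 : ‖traj g₂ u z N‖ ≤ ‖traj g₂ u z N - h^[N] z‖ + ‖h^[N] z‖ := by
              simpa using norm_add_le (traj g₂ u z N - h^[N] z) (h^[N] z)
            have h1 : α' ≤ 1 := min_le_right _ _
            have := hdev.le
            linarith
        have hy : ((0 : U), h^[N] z) ∈ D := by
          constructor
          · simp [mem_closedBall]
          · simp only [mem_closedBall, dist_zero_right]
            linarith
        have hdist : dist ((u N, traj g₂ u z N) : U × Z) ((0 : U), h^[N] z) < β := by
          rw [Prod.dist_eq]
          apply max_lt
          · simpa [dist_zero_right] using huβ N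
          · rw [dist_eq_norm]
            exact lt_of_lt_of_le hdev (le_trans (min_le_left _ _) (min_le_right _ _))
        have := hβ' _ hx _ hy hdist
        rw [dist_eq_norm] at this
        have heq : h^[N + 1] z = g₂ (0, h^[N] z) := by
          rw [Function.iterate_succ_apply']
        show ‖traj g₂ u z (N + 1) - h^[N + 1] z‖ < α
        rw [traj, heq]
        exact this

/-- Uniform attraction with positive entry time on a compact set. -/
lemma UA (h : Z → Z) (hh : Continuous h)
    (hattr : ∀ z, Tendsto (fun n : ℕ => h^[n] z) atTop (𝓝 0))
    (K : Set Z) (hK : IsCompact K) (c : ℝ) (hc : 0 < c) :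
    ∃ N : ℕ, ∀ z ∈ K, ∃ n, 1 ≤ n ∧ n ≤ N ∧ ‖h^[n] z‖ < c := by
  set V : ℕ → Set Z := fun i => (h^[i + 1]) ⁻¹' ball 0 c with hV_def
  have hVopen : ∀ i, IsOpen (V i) := fun i => (isOpen_ball).preimage (hh.iterate (i + 1))
  have hcover : K ⊆ ⋃ i, V i := by
    intro z _
    obtain ⟨n₀, hn₀⟩ := (Metric.tendsto_atTop.mp (hattr z)) c hc
    refine Set.mem_iUnion.mpr ⟨n₀, ?_⟩
    have := hn₀ (n₀ + 1) (Nat.le_succ _)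
    simpa [V, mem_ball, dist_zero_right] using this
  obtain ⟨t, ht⟩ := hK.elim_finite_subcover V hVopen hcover
  refine ⟨t.sup id + 1, fun z hz => ?_⟩
  obtain ⟨i, hit, hiz⟩ := Set.mem_iUnion₂.mp (ht hz)
  refine ⟨i + 1, Nat.le_add_left _ _, Nat.succ_le_succ (Finset.le_sup (f := id) hit), ?_⟩
  simpa [V, mem_ball, dist_zero_right] using hiz

end CascadeAux

namespace CascadeAux2
open CascadeAux

variable {U Z : Type*} [NormedAddCommGroup U] [NormedAddCommGroup Z]
  [ProperSpace U] [ProperSpace Z]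

/-- Small-signal stability of the driven subsystem. -/
lemma SS (g₂ : U × Z → Z) (hg₂ : Continuous g₂)
    (hStab₂ : ∀ ε > (0:ℝ), ∃ δ > (0:ℝ), ∀ z, ‖z‖ < δ →
      ∀ n : ℕ, ‖(fun y => g₂ (0,y))^[n] z‖ < ε)
    (hAttr₂ : ∀ z, Tendsto (fun n : ℕ => (fun y => g₂ (0,y))^[n] z) atTop (𝓝 0)) :
    ∀ ε > (0:ℝ), ∃ δ > (0:ℝ), ∃ ρ > (0:ℝ), ∀ z, ‖z‖ < δ → ∀ u : ℕ → U,
      (∀ n, ‖u n‖ < ρ) → ∀ n, ‖traj g₂ u z n‖ < ε := by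
  intro ε hε
  set h : Z → Z := fun y => g₂ (0, y) with hh_def
  have hh : Continuous h := hg₂.comp (continuous_const.prodMk continuous_id)
  obtain ⟨δ₀, hδ₀pos, hδ₀⟩ := hStab₂ (ε/2) (by linarith)
  set δ := min δ₀ (ε/2) with hδdef
  have hδpos : 0 < δ := lt_min hδ₀pos (by linarith)
  obtain ⟨N, hN⟩ := UA h hh hAttr₂ (closedBall 0 δ) (isCompact_closedBall 0 δ) (δ/2)
    (by linarith)
  obtain ⟨ρ, hρpos, hρ⟩ := FHU g₂ hg₂ (closedBall 0 δ) (isCompact_closedBall 0 δ) N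
    (min (ε/2) (δ/2)) (lt_min (by linarith) (by linarith))
  refine ⟨δ, hδpos, ρ, hρpos, ?_⟩
  intro z hz u hu n
  induction n using Nat.strong_induction_on generalizing z u with
  | _ n ih =>
  have hzK : z ∈ closedBall (0:Z) δ := by
    simpa [mem_closedBall, dist_zero_right] using hz.le
  by_cases hn : n ≤ N
  · have h1 := hρ z hzK u hu n hn
    have h2 : ‖h^[n] z‖ < ε/2 := hδ₀ z (lt_of_lt_of_le hz (min_le_left _ _)) n
    have h3 : ‖traj g₂ u z n‖ ≤ ‖traj g₂ u z n - h^[n] z‖ + ‖h^[n] z‖ := by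
      simpa using norm_add_le (traj g₂ u z n - h^[n] z) (h^[n] z)
    have h4 : min (ε/2) (δ/2) ≤ ε/2 := min_le_left _ _
    linarith
  · obtain ⟨n₀, hn₀1, hn₀N, hn₀⟩ := hN z hzK
    have hdev := hρ z hzK u hu n₀ hn₀N
    have hz' : ‖traj g₂ u z n₀‖ < δ := by
      have h3 : ‖traj g₂ u z n₀‖ ≤ ‖traj g₂ u z n₀ - h^[n₀] z‖ + ‖h^[n₀] z‖ := by
        simpa using norm_add_le (traj g₂ u z n₀ - h^[n₀] z) (h^[n₀] z)
      have h4 : min (ε/2) (δ/2) ≤ δ/2 := min_le_right _ _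
      linarith
    have hsplit : n = n₀ + (n - n₀) :=
      (Nat.add_sub_cancel' (le_trans hn₀N (le_of_not_ge hn))).symm
    rw [hsplit, traj_shift]
    exact ih (n - n₀) (by omega) _ hz' _ (fun i => hu (i + n₀))

end CascadeAux2


open CascadeAux CascadeAux2 in
theorem cascade_proof {m k : ℕ}
    (g₁ : EuclideanSpace ℝ (Fin m) → EuclideanSpace ℝ (Fin m))
    (g₂ : EuclideanSpace ℝ (Fin m) × EuclideanSpace ℝ (Fin k) → EuclideanSpace ℝ (Fin k))
    (hg₁ : Continuous g₁) (hg₂ : Continuous g₂)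
    (hg₁0 : g₁ 0 = 0) (hg₂0 : g₂ (0, 0) = 0)
    (hStab₁ : ∀ ε > (0 : ℝ), ∃ δ > (0 : ℝ), ∀ x₁, ‖x₁‖ < δ → ∀ n : ℕ, ‖g₁^[n] x₁‖ < ε)
    (hAttr₁ : ∀ x₁, Tendsto (fun n : ℕ => g₁^[n] x₁) atTop (𝓝 0))
    (hStab₂ : ∀ ε > (0 : ℝ), ∃ δ > (0 : ℝ), ∀ x₂, ‖x₂‖ < δ →
      ∀ n : ℕ, ‖(fun y => g₂ (0, y))^[n] x₂‖ < ε)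
    (hAttr₂ : ∀ x₂, Tendsto (fun n : ℕ => (fun y => g₂ (0, y))^[n] x₂) atTop (𝓝 0))
    (G : EuclideanSpace ℝ (Fin m) × EuclideanSpace ℝ (Fin k) →
      EuclideanSpace ℝ (Fin m) × EuclideanSpace ℝ (Fin k))
    (hG : G = fun p => (g₁ p.1, g₂ p)) :
    (∀ ε > (0 : ℝ), ∃ δ > (0 : ℝ), ∀ p, ‖p‖ < δ → ∀ n : ℕ, ‖G^[n] p‖ < ε) ∧
      (∀ p, (∃ Δ > (0 : ℝ), ∀ n : ℕ, ‖G^[n] p‖ < Δ) →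
        Tendsto (fun n : ℕ => G^[n] p) atTop (𝓝 (0, 0))) := by
  set h : EuclideanSpace ℝ (Fin k) → EuclideanSpace ℝ (Fin k) := fun y => g₂ (0, y) with hh_def
  have hh : Continuous h := hg₂.comp (continuous_const.prodMk continuous_id)
  -- iterates of the cascade
  have hGiter : ∀ p n, G^[n] p = (g₁^[n] p.1, traj g₂ (fun i => g₁^[i] p.1) p.2 n) := by
    intro p n
    induction n with
    | zero => rfl
    | succ n ih =>
        rw [Function.iterate_succ_apply', ih, hG]
        show (g₁ (g₁^[n] p.1), g₂ (g₁^[n] p.1, traj g₂ (fun i => g₁^[i] p.1) p.2 n)) = _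
        rw [← Function.iterate_succ_apply' g₁, traj]
  constructor
  · -- stability
    intro ε hε
    obtain ⟨δ₂, hδ₂, ρ, hρ, hSS⟩ := SS g₂ hg₂ hStab₂ hAttr₂ ε hε
    obtain ⟨δ₁, hδ₁, h₁⟩ := hStab₁ (min ρ ε) (lt_min hρ hε)
    refine ⟨min δ₁ δ₂, lt_min hδ₁ hδ₂, fun p hp n => ?_⟩
    have hp1 : ‖p.1‖ < δ₁ := lt_of_le_of_lt (norm_fst_le p)
      (lt_of_lt_of_le hp (min_le_left _ _))
    have hp2 : ‖p.2‖ < δ₂ := lt_of_le_of_lt (norm_snd_le p)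
      (lt_of_lt_of_le hp (min_le_right _ _))
    rw [hGiter p n, Prod.norm_def]
    apply max_lt
    · exact lt_of_lt_of_le (h₁ p.1 hp1 n) (min_le_right _ _)
    · exact hSS p.2 hp2 _ (fun i => lt_of_lt_of_le (h₁ p.1 hp1 i) (min_le_left _ _)) n
  · -- attractivity under boundedness
    rintro p ⟨Δ, hΔpos, hΔ⟩
    set u : ℕ → EuclideanSpace ℝ (Fin m) := fun i => g₁^[i] p.1 with hu_def
    set z : ℕ → EuclideanSpace ℝ (Fin k) := fun n => traj g₂ u p.2 n with hz_def
    have hzb : ∀ n, ‖z n‖ < Δ := by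
      intro n
      have := hΔ n
      rw [hGiter p n, Prod.norm_def] at this
      exact lt_of_le_of_lt (le_max_right _ _) this
    have hztend : Tendsto z atTop (𝓝 0) := by
      rw [Metric.tendsto_atTop]
      intro ε hε
      obtain ⟨δ, hδ, ρ, hρ, hSS⟩ := SS g₂ hg₂ hStab₂ hAttr₂ ε hε
      obtain ⟨N, hN⟩ := UA h hh hAttr₂ (closedBall 0 Δ) (isCompact_closedBall 0 Δ) (δ/2)
        (by linarith)
      obtain ⟨ρ', hρ'pos, hρ'⟩ := FHU g₂ hg₂ (closedBall 0 Δ) (isCompact_closedBall 0 Δ) N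
        (δ/2) (by linarith)
      obtain ⟨n₁, hn₁⟩ := Metric.tendsto_atTop.mp (hAttr₁ p.1) (min ρ ρ')
        (lt_min hρ hρ'pos)
      have hus : ∀ i, ‖u (i + n₁)‖ < min ρ ρ' := fun i => by
        have := hn₁ (i + n₁) (Nat.le_add_left _ _)
        rwa [dist_zero_right] at this
      have hz₁K : z n₁ ∈ closedBall (0 : EuclideanSpace ℝ (Fin k)) Δ := by
        simpa [mem_closedBall, dist_zero_right] using (hzb n₁).le
      obtain ⟨n₀, hn₀1, hn₀N, hn₀⟩ := hN (z n₁) hz₁K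
      have hdev := hρ' (z n₁) hz₁K (fun i => u (i + n₁))
        (fun i => lt_of_lt_of_le (hus i) (min_le_right _ _)) n₀ hn₀N
      have hshift₁ : z (n₁ + n₀) = traj g₂ (fun i => u (i + n₁)) (z n₁) n₀ :=
        traj_shift g₂ u p.2 n₁ n₀
      have hz₂ : ‖z (n₁ + n₀)‖ < δ := by
        rw [hshift₁]
        have h3 : ‖traj g₂ (fun i => u (i + n₁)) (z n₁) n₀‖ ≤
            ‖traj g₂ (fun i => u (i + n₁)) (z n₁) n₀ - h^[n₀] (z n₁)‖ + ‖h^[n₀] (z n₁)‖ := by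
          simpa using norm_add_le
            (traj g₂ (fun i => u (i + n₁)) (z n₁) n₀ - h^[n₀] (z n₁)) (h^[n₀] (z n₁))
        linarith
      have hfin : ∀ j, ‖traj g₂ (fun i => u (i + (n₁ + n₀))) (z (n₁ + n₀)) j‖ < ε :=
        hSS (z (n₁ + n₀)) hz₂ _ (fun i => by
          have : ‖u ((i + n₀) + n₁)‖ < min ρ ρ' := hus (i + n₀)
          have h5 : (i + n₀) + n₁ = i + (n₁ + n₀) := by omega
          rw [h5] at this
          exact lt_of_lt_of_le this (min_le_left _ _))
      refine ⟨n₁ + n₀, fun n hn => ?_⟩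
      rw [dist_zero_right]
      have hsplit : n = (n₁ + n₀) + (n - (n₁ + n₀)) := by omega
      show ‖z n‖ < ε
      rw [hz_def]
      simp only
      rw [hsplit, traj_shift]
      exact hfin _
    have : (fun n : ℕ => G^[n] p) = fun n => (g₁^[n] p.1, z n) := by
      funext n; rw [hGiter p n]
    rw [this, nhds_prod_eq]
    exact (hAttr₁ p.1).prodMk hztend

open Metric Filter Topology

theorem cascade_stability_discrete {m k : ℕ}
    (g₁ : EuclideanSpace ℝ (Fin m) → EuclideanSpace ℝ (Fin m))
    (g₂ : EuclideanSpace ℝ (Fin m) × EuclideanSpace ℝ (Fin k) → EuclideanSpace ℝ (Fin k))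
    (hg₁ : Continuous g₁) (hg₂ : Continuous g₂)
    (hg₁0 : g₁ 0 = 0) (hg₂0 : g₂ (0, 0) = 0)
    -- the origin is stable for the upper subsystem x₁⁺ = g₁ x₁
    (hStab₁ : ∀ ε > (0 : ℝ), ∃ δ > (0 : ℝ), ∀ x₁, ‖x₁‖ < δ → ∀ n : ℕ, ‖g₁^[n] x₁‖ < ε)
    -- the origin is globally attractive for the upper subsystem
    (hAttr₁ : ∀ x₁, Tendsto (fun n : ℕ => g₁^[n] x₁) atTop (𝓝 0))
    -- the origin is stable for the zero-input lower subsystem x₂⁺ = g₂ (0, x₂)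
    (hStab₂ : ∀ ε > (0 : ℝ), ∃ δ > (0 : ℝ), ∀ x₂, ‖x₂‖ < δ →
      ∀ n : ℕ, ‖(fun y => g₂ (0, y))^[n] x₂‖ < ε)
    -- the origin is globally attractive for the zero-input lower subsystem
    (hAttr₂ : ∀ x₂, Tendsto (fun n : ℕ => (fun y => g₂ (0, y))^[n] x₂) atTop (𝓝 0))
    (G : EuclideanSpace ℝ (Fin m) × EuclideanSpace ℝ (Fin k) →
      EuclideanSpace ℝ (Fin m) × EuclideanSpace ℝ (Fin k))
    (hG : G = fun p => (g₁ p.1, g₂ p)) :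
    (∀ ε > (0 : ℝ), ∃ δ > (0 : ℝ), ∀ p, ‖p‖ < δ → ∀ n : ℕ, ‖G^[n] p‖ < ε) ∧
      (∀ p, (∃ Δ > (0 : ℝ), ∀ n : ℕ, ‖G^[n] p‖ < Δ) →
        Tendsto (fun n : ℕ => G^[n] p) atTop (𝓝 (0, 0))) := by
  exact cascade_proof g₁ g₂ hg₁ hg₂ hg₁0 hg₂0 hStab₁ hAttr₁ hStab₂ hAttr₂ G hG
end

section
/- Let f : ℝⁿ → ℝⁿ be continuous and consider ẋ = f(x). Suppose: (i) Mₑ ⊆ ℝⁿ is closed and forward invariant (every solution with φ(0) ∈ Mₑ satisfies φ(t) ∈ Mₑ for all t in its domain); (ii) Mᵢ ⊆ Mₑ is closed, stable relative to Mₑ, and locally attractive relative to Mₑ (there exists δ₁ > 0 such that every complete solution φ with φ(0) ∈ Mₑ and dist(φ(0), Mᵢ) < δ₁ satisfies dist(φ(t), Mᵢ) → 0); (iii) M∘ ⊆ Mᵢ is compact, stable relative to Mᵢ, and locally attractive relative to Mᵢ (there exists δ₂ > 0 such that every complete solution φ with φ(0) ∈ Mᵢ and dist(φ(0), M∘) <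 δ₂ satisfies dist(φ(t), M∘) → 0). Then M∘ is asymptotically stable relative to Mₑ: M∘ is stable relative to Mₑ, and there exists δ > 0 such that every complete solution φ with φ(0) ∈ Mₑ and dist(φ(0), M∘) < δ satisfies dist(φ(t), M∘) → 0 as t → ∞. -/
open Metric Filter Topology

/-!
Stability: a solution starting close to `Mo` starts close to `Mi` and, by stability of `Mi`,
stays close to `Mi`. Were it to leave a small neighbourhood of `Mo`, it would cross a shell
`μ ≤ infDist · Mo ≤ ε` from the inside to the outside while arbitrarily close to `Mi`. Along a
sequence of such crossings the segments are uniformly Lipschitz (`f` is bounded on the compact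
shell), so by Arzelà–Ascoli a subsequence converges to a solution starting in `Mi`; since solutions
need not be unique, this compactness of solution sets replaces continuous dependence on initial
data. If the crossing times stay bounded, the limit contradicts stability of `Mo` relative to
`Mi`; if not, the limit stays in the shell forever, contradicting attractivity of `Mo` relative
to `Mi`.

Attractivity: a solution starting close to `Mo` stays in a compact neighbourhood of `Mo` and
converges to `Mi`. By the same compactness argument it cannot linger in a shell around `Mo` once
it is close to `Mi`, so it comes arbitrarily close to `Mo`, and stability of `Mo` keeps it there.
-/

/-- `φ : ℝ → ℝⁿ` restricted to `[0, T)` (with `0 < T ≤ ∞`) is a solution of `ẋ = f x`. -/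
def IsSolution {d : ℕ} (f : EuclideanSpace ℝ (Fin d) → EuclideanSpace ℝ (Fin d))
    (T : EReal) (φ : ℝ → EuclideanSpace ℝ (Fin d)) : Prop :=
  0 < T ∧ ∀ t : ℝ, 0 ≤ t → (t : EReal) < T →
    HasDerivWithinAt φ (f (φ t)) {s : ℝ | 0 ≤ s ∧ (s : EReal) < T} t

/-- `Y` is forward invariant for `ẋ = f x`. -/
def FwdInvariant {d : ℕ} (f : EuclideanSpace ℝ (Fin d) → EuclideanSpace ℝ (Fin d))
    (Y : Set (EuclideanSpace ℝ (Fin d))) : Prop :=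
  ∀ (T : EReal) (φ : ℝ → EuclideanSpace ℝ (Fin d)), IsSolution f T φ → φ 0 ∈ Y →
    ∀ t : ℝ, 0 ≤ t → (t : EReal) < T → φ t ∈ Y

/-- `X` is stable relative to `Y` for `ẋ = f x`. -/
def StableRelCT {d : ℕ} (f : EuclideanSpace ℝ (Fin d) → EuclideanSpace ℝ (Fin d))
    (Y X : Set (EuclideanSpace ℝ (Fin d))) : Prop :=
  ∀ ε > (0 : ℝ), ∀ Δ > (0 : ℝ), ∃ δ > (0 : ℝ),
    ∀ (T : EReal) (φ : ℝ → EuclideanSpace ℝ (Fin d)), IsSolution f T φ → φ 0 ∈ Y →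
      infDist (φ 0) X < δ → ‖φ 0‖ < Δ →
        ∀ t : ℝ, 0 ≤ t → (t : EReal) < T → infDist (φ t) X < ε

/-- `X` is globally attractive relative to `Y` for `ẋ = f x`. -/
def GloballyAttractiveRelCT {d : ℕ}
    (f : EuclideanSpace ℝ (Fin d) → EuclideanSpace ℝ (Fin d))
    (Y X : Set (EuclideanSpace ℝ (Fin d))) : Prop :=
  ∀ φ : ℝ → EuclideanSpace ℝ (Fin d), IsSolution f ⊤ φ → φ 0 ∈ Y →
    Tendsto (fun t : ℝ => infDist (φ t) X) atTop (𝓝 0)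

open Set

theorem exists_subseq_tendsto_of_lipschitzWith {α β : Type*} [PseudoMetricSpace α]
    [TopologicalSpace.SeparableSpace α] [Nonempty α] [PseudoMetricSpace β] {C : NNReal}
    {K : Set β} (hK : IsCompact K) {g : ℕ → α → β} (hg : ∀ k, LipschitzWith C (g k))
    (hgK : ∀ k t, g k t ∈ K) :
    ∃ σ : ℕ → ℕ, StrictMono σ ∧ ∃ h : α → β, LipschitzWith C h ∧
      ∀ t, Tendsto (fun k => g (σ k) t) atTop (𝓝 (h t)) := by
  obtain ⟨q, hq⟩ := TopologicalSpace.exists_dense_seq α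
  obtain ⟨G, -, σ, hσ, hG⟩ := (isCompact_univ_pi fun _ : ℕ => hK).tendsto_subseq
    (x := fun k n => g k (q n)) fun k n _ => hgK k (q n)
  have hcauchy : ∀ t, CauchySeq fun k => g (σ k) t := by
    intro t
    rw [Metric.cauchySeq_iff']
    intro ε hε
    obtain ⟨n, hn⟩ := hq.exists_dist_lt t (show 0 < ε / (3 * (C + 1)) by positivity)
    obtain ⟨N, hN⟩ := Metric.cauchySeq_iff'.1 (tendsto_pi_nhds.1 hG n).cauchySeq (ε / 3)
      (by positivity)
    have hCn : (C : ℝ) * dist t (q n) < ε / 3 := by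
      calc (C : ℝ) * dist t (q n) ≤ (C + 1) * dist t (q n) := by gcongr; linarith
        _ < (C + 1) * (ε / (3 * (C + 1))) := by gcongr
        _ = ε / 3 := by field_simp
    refine ⟨N, fun k hk => ?_⟩
    calc dist (g (σ k) t) (g (σ N) t)
        ≤ dist (g (σ k) t) (g (σ k) (q n)) + dist (g (σ k) (q n)) (g (σ N) (q n))
          + dist (g (σ N) (q n)) (g (σ N) t) := dist_triangle4 _ _ _ _
      _ < ε := by
        have h1 := (hg (σ k)).dist_le_mul t (q n)
        have h3 := (hg (σ N)).dist_le_mul (q n) t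
        have h2 : dist (g (σ k) (q n)) (g (σ N) (q n)) < ε / 3 := hN k hk
        rw [dist_comm (q n)] at h3
        linarith
  choose h _ htend using fun t => cauchySeq_tendsto_of_isComplete hK.isComplete
    (fun k => hgK (σ k) t) (hcauchy t)
  refine ⟨σ, hσ, h, LipschitzWith.of_dist_le_mul fun x y => ?_, htend⟩
  exact le_of_tendsto ((htend x).dist (htend y))
    (Eventually.of_forall fun k => (hg (σ k)).dist_le_mul x y)

theorem tendsto_apply_of_lipschitzWith {ι α β : Type*} [PseudoMetricSpace α]
    [PseudoMetricSpace β] {l : Filter ι} {C : NNReal} {g : ι → α → β}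
    (hg : ∀ i, LipschitzWith C (g i)) {x : ι → α} {a : α} {b : β}
    (hx : Tendsto x l (𝓝 a)) (ha : Tendsto (fun i => g i a) l (𝓝 b)) :
    Tendsto (fun i => g i (x i)) l (𝓝 b) := by
  refine ha.congr_dist (squeeze_zero (fun _ => dist_nonneg)
    (fun i => (hg i).dist_le_mul a (x i)) ?_)
  simpa using ((tendsto_const_nhds (x := a)).dist hx).const_mul (C : ℝ)

section IntegralEquation

variable {E : Type*} [NormedAddCommGroup E] [NormedSpace ℝ E]

theorem eq_add_integral_of_hasDerivWithinAt_Icc [CompleteSpace E] {ψ v : ℝ → E} {a : ℝ}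
    (hψ : ∀ t ∈ Icc 0 a, HasDerivWithinAt ψ (v t) (Icc 0 a) t) (hv : ContinuousOn v (Icc 0 a))
    {t : ℝ} (ht : t ∈ Icc 0 a) : ψ t = ψ 0 + ∫ s in (0 : ℝ)..t, v s := by
  have hsub : Icc 0 t ⊆ Icc 0 a := Icc_subset_Icc le_rfl ht.2
  have hderiv : ∀ s ∈ Ioo 0 t, HasDerivAt ψ (v s) s := fun s hs =>
    (hψ s (Ioo_subset_Icc_self.trans hsub hs)).hasDerivAt
      (Icc_mem_nhds hs.1 (hs.2.trans_le ht.2))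
  rw [intervalIntegral.integral_eq_sub_of_hasDerivAt_of_le ht.1
    (fun s hs => ((hψ s (hsub hs)).continuousWithinAt).mono hsub) hderiv
    ((hv.mono hsub).intervalIntegrable_of_Icc ht.1)]
  abel

theorem hasDerivWithinAt_of_eq_add_integral [CompleteSpace E] {f : E → E} (hf : Continuous f)
    {h : ℝ → E} (hh : Continuous h) {S : Set ℝ}
    (heq : ∀ t ∈ S, h t = h 0 + ∫ s in (0 : ℝ)..t, f (h s)) {t : ℝ} (ht : t ∈ S) :
    HasDerivWithinAt h (f (h t)) S t := by
  have hint : HasDerivAt (fun u => h 0 + ∫ s in (0 : ℝ)..u, f (h s)) (f (h t)) t :=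
    ((hf.comp hh).integral_hasStrictDerivAt 0 t).hasDerivAt.const_add (h 0)
  exact hint.hasDerivWithinAt.congr heq (heq t ht)

theorem eq_add_integral_of_tendsto {f : E → E} (hf : Continuous f) {K : Set E}
    (hK : IsCompact K) {g : ℕ → ℝ → E} {h : ℝ → E} (hg : ∀ k, Continuous (g k))
    (hgK : ∀ k s, g k s ∈ K) (hgh : ∀ s, Tendsto (fun k => g k s) atTop (𝓝 (h s))) {t : ℝ}
    (heq : ∀ᶠ k in atTop, g k t = g k 0 + ∫ s in (0 : ℝ)..t, f (g k s)) :
    h t = h 0 + ∫ s in (0 : ℝ)..t, f (h s) := by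
  obtain ⟨C, hC⟩ := hK.exists_bound_of_continuousOn hf.continuousOn
  have hint : Tendsto (fun k => ∫ s in (0 : ℝ)..t, f (g k s)) atTop
      (𝓝 (∫ s in (0 : ℝ)..t, f (h s))) :=
    intervalIntegral.tendsto_integral_filter_of_dominated_convergence (fun _ => C)
      (Eventually.of_forall fun k => (hf.comp (hg k)).aestronglyMeasurable)
      (Eventually.of_forall fun k => MeasureTheory.ae_of_all _ fun s _ => hC _ (hgK k s))
      intervalIntegrable_const
      (MeasureTheory.ae_of_all _ fun s _ => (hf.tendsto _).comp (hgh s))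
  exact tendsto_nhds_unique (hgh t) (((hgh 0).add hint).congr' (heq.mono fun k hk => hk.symm))

theorem exists_subseq_tendsto_solution [CompleteSpace E] {f : E → E} (hf : Continuous f)
    {K : Set E} (hK : IsCompact K) {g : ℕ → ℝ → E} {b : ℕ → ℝ} (hb : ∀ k, 0 ≤ b k)
    (hg : ∀ k, ∀ t ∈ Icc 0 (b k), HasDerivWithinAt (g k) (f (g k t)) (Icc 0 (b k)) t)
    (hgK : ∀ k, MapsTo (g k) (Icc 0 (b k)) K) {L : EReal}
    (hbL : ∀ t : ℝ, (t : EReal) < L → ∀ᶠ k in atTop, t ≤ b k) :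
    ∃ σ : ℕ → ℕ, StrictMono σ ∧ ∃ h : ℝ → E, Continuous h ∧
      (∀ t : ℝ, 0 ≤ t → (t : EReal) < L →
        HasDerivWithinAt h (f (h t)) {s : ℝ | 0 ≤ s ∧ (s : EReal) < L} t) ∧
      ∀ (x : ℕ → ℝ) (t : ℝ), (∀ᶠ k in atTop, x k ∈ Icc 0 (b (σ k))) →
        Tendsto x atTop (𝓝 t) → Tendsto (fun k => g (σ k) (x k)) atTop (𝓝 (h t)) := by
  obtain ⟨C, hC⟩ := hK.exists_bound_of_continuousOn hf.continuousOn
  set χ : ℕ → ℝ → E := fun k => IccExtend (hb k) ((Icc 0 (b k)).domRestrict (g k))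
  have hχg : ∀ k, EqOn (χ k) (g k) (Icc 0 (b k)) := fun k _ ht => IccExtend_of_mem _ _ ht
  have hχK : ∀ k t, χ k t ∈ K := fun k t => hgK k (projIcc 0 (b k) (hb k) t).2
  have hχlip : ∀ k, LipschitzWith C.toNNReal (χ k) := fun k => by
    have hlip := (convex_Icc 0 (b k)).lipschitzOnWith_of_nnnorm_hasDerivWithin_le (hg k)
      fun t ht => by
        rw [← NNReal.coe_le_coe, coe_nnnorm, Real.coe_toNNReal']
        exact (hC _ (hgK k ht)).trans (le_max_left C 0)
    have hχ := hlip.to_restrict.comp (LipschitzWith.projIcc (hb k))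
    rwa [mul_one] at hχ
  have hχ : ∀ k, ∀ t ∈ Icc 0 (b k), HasDerivWithinAt (χ k) (f (χ k t)) (Icc 0 (b k)) t :=
    fun k t ht => by
      rw [hχg k ht]
      exact (hg k t ht).congr (hχg k) (hχg k ht)
  obtain ⟨σ, hσ, h, hhlip, hχh⟩ := exists_subseq_tendsto_of_lipschitzWith hK hχlip hχK
  have heq : ∀ t ∈ {s : ℝ | 0 ≤ s ∧ (s : EReal) < L},
      h t = h 0 + ∫ s in (0 : ℝ)..t, f (h s) := by
    rintro t ⟨ht0, htL⟩
    refine eq_add_integral_of_tendsto hf hK (fun k => (hχlip (σ k)).continuous)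
      (fun k => hχK (σ k)) hχh ?_
    filter_upwards [hσ.tendsto_atTop.eventually (hbL t htL)] with k hk
    exact eq_add_integral_of_hasDerivWithinAt_Icc (hχ (σ k))
      (hf.comp (hχlip (σ k)).continuous).continuousOn ⟨ht0, hk⟩
  refine ⟨σ, hσ, h, hhlip.continuous, fun t ht0 htL =>
    hasDerivWithinAt_of_eq_add_integral hf hhlip.continuous heq ⟨ht0, htL⟩, fun x t hx hxt => ?_⟩
  refine (tendsto_apply_of_lipschitzWith (fun k => hχlip (σ k)) hxt (hχh t)).congr' ?_
  filter_upwards [hx] with k hk using hχg (σ k) hk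

end IntegralEquation

theorem exists_crossing_of_continuousOn {u : ℝ → ℝ} {a b μ ν : ℝ} (hab : a ≤ b)
    (hu : ContinuousOn u (Icc a b)) (ha : u a ≤ μ) (hμν : μ < ν) (hb : ν ≤ u b) :
    ∃ s t, a ≤ s ∧ s ≤ t ∧ t ≤ b ∧ u s = μ ∧ u t = ν ∧ MapsTo u (Icc s t) (Icc μ ν) := by
  have hit : ∀ {c d w}, Icc c d ⊆ Icc a b → c ≤ d → w ∈ Icc (u c) (u d) →
      ∃ y ∈ Icc c d, u y = w := fun hsub hcd hw =>
    intermediate_value_Icc hcd (hu.mono hsub) hw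
  have hlevel : ∀ {d} w, d ≤ b → IsCompact (Icc a d ∩ u ⁻¹' {w}) := fun w hd =>
    isCompact_Icc.of_isClosed_subset ((hu.mono (Icc_subset_Icc le_rfl hd))
      |>.preimage_isClosed_of_isClosed isClosed_Icc isClosed_singleton) inter_subset_left
  -- `t` is the first time `u` reaches `ν`, and `s` the last time before `t` that `u` equals `μ`
  obtain ⟨t, ⟨⟨hat, htb⟩, htν⟩, htmin⟩ := (hlevel ν le_rfl).exists_isLeast
    (by obtain ⟨y, hy, hyν⟩ := hit subset_rfl hab ⟨ha.trans hμν.le, hb⟩; exact ⟨y, hy, hyν⟩)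
  have hbefore : ∀ x ∈ Ico a t, u x < ν := fun x ⟨hax, hxt⟩ => by
    by_contra! hx
    obtain ⟨y, hy, hyν⟩ := hit (Icc_subset_Icc le_rfl (hxt.le.trans htb)) hax ⟨ha.trans hμν.le, hx⟩
    exact (htmin ⟨⟨hy.1, hy.2.trans (hxt.le.trans htb)⟩, hyν⟩).not_gt (hy.2.trans_lt hxt)
  obtain ⟨s, ⟨⟨has, hst⟩, hsμ⟩, hsmax⟩ := (hlevel μ htb).exists_isGreatest
    (by obtain ⟨y, hy, hyμ⟩ := hit (Icc_subset_Icc le_rfl htb) hat ⟨ha, htν.symm ▸ hμν.le⟩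
        exact ⟨y, hy, hyμ⟩)
  have hafter : ∀ x ∈ Ioc s t, μ < u x := fun x ⟨hsx, hxt⟩ => by
    by_contra! hx
    obtain ⟨y, hy, hyμ⟩ := hit (Icc_subset_Icc (has.trans hsx.le) htb) hxt ⟨hx, htν.symm ▸ hμν.le⟩
    exact (hsmax ⟨⟨has.trans (hsx.le.trans hy.1), hy.2⟩, hyμ⟩).not_gt (hsx.trans_le hy.1)
  refine ⟨s, t, has, hst, htb, hsμ, htν, fun x ⟨hsx, hxt⟩ => ⟨?_, ?_⟩⟩
  · rcases hsx.eq_or_lt with rfl | hsx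
    · exact hsμ.ge
    · exact (hafter x ⟨hsx, hxt⟩).le
  · rcases hxt.eq_or_lt with rfl | hxt
    · exact htν.le
    · exact (hbefore x ⟨has.trans hsx, hxt⟩).le

theorem IsCompact.isCompact_setOf_infDist_le {X : Type*} [PseudoMetricSpace X] [ProperSpace X]
    {s : Set X} (hs : IsCompact s) (hne : s.Nonempty) (r : ℝ) :
    IsCompact {x | infDist x s ≤ r} :=
  isCompact_of_isClosed_isBounded (isClosed_le (continuous_infDist_pt s) continuous_const)
    (hs.isBounded.thickening.subset fun _ hx =>
      (mem_thickening_iff_infDist_lt hne).2 (lt_of_le_of_lt hx (lt_add_one r)))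

theorem IsClosed.mem_of_tendsto_infDist {X ι : Type*} [PseudoMetricSpace X] {l : Filter ι}
    [l.NeBot] {s : Set X} (hs : IsClosed s) (hne : s.Nonempty) {x : ι → X} {a : X}
    (hx : Tendsto x l (𝓝 a)) (hxs : Tendsto (fun i => infDist (x i) s) l (𝓝 0)) : a ∈ s :=
  (hs.mem_iff_infDist_zero hne).2
    (tendsto_nhds_unique (((continuous_infDist_pt s).tendsto a).comp hx) hxs)

section Solutions

variable {d : ℕ} {f : EuclideanSpace ℝ (Fin d) → EuclideanSpace ℝ (Fin d)}
  {T : EReal} {φ : ℝ → EuclideanSpace ℝ (Fin d)}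

def AttractiveRelCT (f : EuclideanSpace ℝ (Fin d) → EuclideanSpace ℝ (Fin d))
    (Y X : Set (EuclideanSpace ℝ (Fin d))) (δ : ℝ) : Prop :=
  ∀ φ : ℝ → EuclideanSpace ℝ (Fin d), IsSolution f ⊤ φ → φ 0 ∈ Y → infDist (φ 0) X < δ →
    Tendsto (fun t : ℝ => infDist (φ t) X) atTop (𝓝 0)

theorem IsSolution.continuousOn_Icc (hφ : IsSolution f T φ) {t : ℝ} (ht : (t : EReal) < T) :
    ContinuousOn φ (Icc 0 t) := fun u hu =>
  (hφ.2 u hu.1 ((EReal.coe_le_coe_iff.2 hu.2).trans_lt ht)).continuousWithinAt.mono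
    fun _ hv => ⟨hv.1, (EReal.coe_le_coe_iff.2 hv.2).trans_lt ht⟩

theorem IsSolution.hasDerivWithinAt_comp_const_add (hφ : IsSolution f T φ) {s t : ℝ}
    {S : Set ℝ} (hS : MapsTo (s + ·) S {u | 0 ≤ u ∧ (u : EReal) < T}) (ht : t ∈ S) :
    HasDerivWithinAt (fun u => φ (s + u)) (f (φ (s + t))) S t := by
  simpa [Function.comp_def] using
    (hφ.2 _ (hS ht).1 (hS ht).2).scomp t ((hasDerivAt_id' t).const_add s).hasDerivWithinAt hS

theorem IsSolution.hasDerivWithinAt_Icc_sub (hφ : IsSolution f T φ) {s t : ℝ} (hs : 0 ≤ s)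
    (ht : (t : EReal) < T) :
    ∀ u ∈ Icc 0 (t - s), HasDerivWithinAt (fun r => φ (s + r)) (f (φ (s + u))) (Icc 0 (t - s)) u :=
  fun _ => hφ.hasDerivWithinAt_comp_const_add fun u hu =>
    ⟨by linarith [hu.1], (EReal.coe_le_coe_iff.2 (by linarith [hu.2])).trans_lt ht⟩

theorem IsSolution.comp_const_add (hφ : IsSolution f ⊤ φ) {s : ℝ} (hs : 0 ≤ s) :
    IsSolution f ⊤ (fun u => φ (s + u)) :=
  ⟨hφ.1, fun _ ht _ => hφ.hasDerivWithinAt_comp_const_add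
    (fun _ hu => ⟨add_nonneg hs hu.1, EReal.coe_lt_top _⟩) ⟨ht, EReal.coe_lt_top _⟩⟩

theorem StableRelCT.tendsto_infDist_of_forall_exists_lt {Y X : Set (EuclideanSpace ℝ (Fin d))}
    (hX : StableRelCT f Y X) (hY : FwdInvariant f Y) (hφ : IsSolution f ⊤ φ) (hφY : φ 0 ∈ Y)
    {R : ℝ} (hR : ∀ t, 0 ≤ t → ‖φ t‖ < R) (hclose : ∀ η > 0, ∃ t, 0 ≤ t ∧ infDist (φ t) X < η) :
    Tendsto (fun t => infDist (φ t) X) atTop (𝓝 0) := by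
  rw [Metric.tendsto_nhds]
  intro η hη
  obtain ⟨δ, hδ, hstable⟩ := hX η hη R ((norm_nonneg _).trans_lt (hR 0 le_rfl))
  obtain ⟨t₀, ht₀, hδt₀⟩ := hclose δ hδ
  filter_upwards [eventually_ge_atTop t₀] with t ht
  have hnear := hstable ⊤ _ (hφ.comp_const_add ht₀)
    (by simpa using hY ⊤ φ hφ hφY t₀ ht₀ (EReal.coe_lt_top _)) (by simpa using hδt₀)
    (by simpa using hR t₀ ht₀) (t - t₀) (sub_nonneg.2 ht) (EReal.coe_lt_top _)
  rw [Real.dist_eq, sub_zero, abs_of_nonneg infDist_nonneg]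
  simpa using hnear

variable {Mi Mo : Set (EuclideanSpace ℝ (Fin d))} {δ₂ : ℝ}

theorem exists_time_bound_in_shell (hf : Continuous f) (hMiClosed : IsClosed Mi)
    (hMi : Mi.Nonempty) (hMoCompact : IsCompact Mo) (hMo : Mo.Nonempty)
    (hMoAttr : AttractiveRelCT f Mi Mo δ₂) {μ ε : ℝ} (hμ : 0 < μ) (hεδ₂ : ε < δ₂) :
    ∃ ρ > 0, ∃ τ : ℝ, ∀ (T : EReal) (φ : ℝ → EuclideanSpace ℝ (Fin d)) (s t : ℝ),
      IsSolution f T φ → 0 ≤ s → (t : EReal) < T → infDist (φ s) Mi < ρ →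
        MapsTo (fun u => infDist (φ u) Mo) (Icc s t) (Icc μ ε) → t - s ≤ τ := by
  by_contra! hlong
  choose T Φ s t hΦ hs htT hΦMi hshell hst using
    fun k : ℕ => hlong (1 / (k + 1)) Nat.one_div_pos_of_nat k
  have hlen : ∀ r : ℝ, ∀ᶠ k in atTop, r ≤ t k - s k := fun r =>
    (tendsto_natCast_atTop_atTop.eventually_ge_atTop r).mono fun k hk => hk.trans (hst k).le
  obtain ⟨σ, hσ, h, -, hh, hconv⟩ := exists_subseq_tendsto_solution hf
    (hMoCompact.isCompact_setOf_infDist_le hMo ε)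
    (fun k => (Nat.cast_nonneg k).trans (hst k).le)
    (fun k => (hΦ k).hasDerivWithinAt_Icc_sub (hs k) (htT k))
    (fun k u hu => (hshell k ⟨by linarith [hu.1], by linarith [hu.2]⟩).2) (L := ⊤)
    fun r _ => hlen r
  have hconv_const : ∀ r, 0 ≤ r → Tendsto (fun k => Φ (σ k) (s (σ k) + r)) atTop (𝓝 (h r)) :=
    fun r hr => hconv _ r ((hσ.tendsto_atTop.eventually (hlen r)).mono fun _ hk => ⟨hr, hk⟩)
      tendsto_const_nhds
  have hshell_h : ∀ r, 0 ≤ r → infDist (h r) Mo ∈ Icc μ ε := fun r hr =>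
    isClosed_Icc.mem_of_tendsto (((continuous_infDist_pt Mo).tendsto _).comp (hconv_const r hr))
      ((hσ.tendsto_atTop.eventually (hlen r)).mono fun k hk =>
        hshell (σ k) ⟨by linarith, by linarith⟩)
  have hh0 : h 0 ∈ Mi := hMiClosed.mem_of_tendsto_infDist hMi
    (by simpa using hconv_const 0 le_rfl)
    (squeeze_zero (fun _ => infDist_nonneg) (fun k => (hΦMi (σ k)).le)
      (tendsto_one_div_add_atTop_nhds_zero_nat.comp hσ.tendsto_atTop))
  obtain ⟨r, hr, hr0⟩ := (((hMoAttr h ⟨EReal.zero_lt_top, hh⟩ hh0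
    ((hshell_h 0 le_rfl).2.trans_lt hεδ₂)).eventually (gt_mem_nhds hμ)).and
      (eventually_ge_atTop 0)).exists
  exact hr.not_ge (hshell_h r hr0).1

theorem exists_not_cross_shell (hf : Continuous f) (hMiClosed : IsClosed Mi)
    (hMi : Mi.Nonempty) (hMoCompact : IsCompact Mo) (hMo : Mo.Nonempty)
    (hMoStable : StableRelCT f Mi Mo) (hMoAttr : AttractiveRelCT f Mi Mo δ₂) {ε : ℝ}
    (hε : 0 < ε) (hεδ₂ : ε < δ₂) :
    ∃ μ ∈ Ioo 0 ε, ∃ ρ > 0, ∀ (T : EReal) (φ : ℝ → EuclideanSpace ℝ (Fin d)) (s t : ℝ),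
      IsSolution f T φ → 0 ≤ s → s ≤ t → (t : EReal) < T → infDist (φ s) Mi < ρ →
        infDist (φ s) Mo ≤ μ → MapsTo (fun u => infDist (φ u) Mo) (Icc s t) (Icc μ ε) →
          infDist (φ t) Mo < ε := by
  have hK := hMoCompact.isCompact_setOf_infDist_le hMo ε
  obtain ⟨R, hR, hKR⟩ := hK.isBounded.exists_pos_norm_lt
  obtain ⟨δ, hδ, hstable⟩ := hMoStable (ε / 2) (half_pos hε) R hR
  obtain ⟨μ, hμ, hμδε⟩ := exists_between (lt_min hδ hε)
  have hμδ : μ < δ := hμδε.trans_le (min_le_left δ ε)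
  have hμε : μ < ε := hμδε.trans_le (min_le_right δ ε)
  obtain ⟨ρ, hρ, τ, hτ⟩ :=
    exists_time_bound_in_shell hf hMiClosed hMi hMoCompact hMo hMoAttr hμ hεδ₂
  refine ⟨μ, ⟨hμ, hμε⟩, ?_⟩
  by_contra! hcross
  choose T Φ s t hΦ hs hst htT hΦMi hΦμ hshell hΦε using
    fun k : ℕ => hcross (min ρ (1 / (k + 1))) (lt_min hρ Nat.one_div_pos_of_nat)
  obtain ⟨L, hL, ψ, hψ, hLψ⟩ := isCompact_Icc.tendsto_subseq (x := fun k => t k - s k)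
    fun k => ⟨sub_nonneg.2 (hst k), hτ _ _ _ _ (hΦ k) (hs k) (htT k)
      ((hΦMi k).trans_le (min_le_left _ _)) (hshell k)⟩
  obtain ⟨σ, hσ, h, hhc, hh, hconv⟩ := exists_subseq_tendsto_solution hf hK
    (fun k => sub_nonneg.2 (hst (ψ k)))
    (fun k => (hΦ (ψ k)).hasDerivWithinAt_Icc_sub (hs _) (htT _))
    (fun k u hu => (hshell (ψ k) ⟨by linarith [hu.1], by linarith [hu.2]⟩).2) (L := L)
    fun r hr => (hLψ.eventually (lt_mem_nhds (EReal.coe_lt_coe_iff.1 hr))).mono fun _ => le_of_lt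
  have hinfDist := (continuous_infDist_pt Mo).tendsto
  have hstart : Tendsto (fun k => Φ (ψ (σ k)) (s (ψ (σ k)))) atTop (𝓝 (h 0)) := by
    simpa using hconv (fun _ => 0) 0
      (Eventually.of_forall fun _ => ⟨le_rfl, sub_nonneg.2 (hst _)⟩) tendsto_const_nhds
  have hend : Tendsto (fun k => Φ (ψ (σ k)) (t (ψ (σ k)))) atTop (𝓝 (h L)) := by
    simpa using hconv (fun k => t (ψ (σ k)) - s (ψ (σ k))) L
      (Eventually.of_forall fun _ => ⟨sub_nonneg.2 (hst _), le_rfl⟩) (hLψ.comp hσ.tendsto_atTop)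
  have hh0Mo : infDist (h 0) Mo ≤ μ :=
    le_of_tendsto ((hinfDist _).comp hstart) (Eventually.of_forall fun _ => hΦμ _)
  have hhLMo : ε ≤ infDist (h L) Mo :=
    ge_of_tendsto ((hinfDist _).comp hend) (Eventually.of_forall fun _ => hΦε _)
  have hh0Mi : h 0 ∈ Mi := hMiClosed.mem_of_tendsto_infDist hMi hstart
    (squeeze_zero (fun _ => infDist_nonneg) (fun _ => (hΦMi _).le.trans (min_le_right _ _))
      (tendsto_one_div_add_atTop_nhds_zero_nat.comp (hψ.comp hσ).tendsto_atTop))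
  rcases hL.1.eq_or_lt with rfl | hLpos
  · linarith
  have hnear : ∀ u ∈ Ico 0 L, infDist (h u) Mo < ε / 2 := fun u hu =>
    hstable L h ⟨EReal.coe_pos.2 hLpos, hh⟩ hh0Mi (hh0Mo.trans_lt hμδ)
      (hKR _ (show infDist (h 0) Mo ≤ ε by linarith)) u hu.1 (EReal.coe_lt_coe_iff.2 hu.2)
  have hhL : infDist (h L) Mo ≤ ε / 2 :=
    le_of_tendsto (((hinfDist _).comp hhc.continuousAt).mono_left nhdsWithin_le_nhds)
      (eventually_of_mem (Ioo_mem_nhdsLT hLpos) fun u hu => (hnear u ⟨hu.1.le, hu.2⟩).le)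
  linarith

theorem stableRelCT_of_stableRelCT_of_attractiveRelCT {Me : Set (EuclideanSpace ℝ (Fin d))}
    (hf : Continuous f) (hMiClosed : IsClosed Mi) (hMiStable : StableRelCT f Me Mi)
    (hMoSub : Mo ⊆ Mi) (hMoCompact : IsCompact Mo) (hMo : Mo.Nonempty)
    (hMoStable : StableRelCT f Mi Mo) (hMoAttr : AttractiveRelCT f Mi Mo δ₂) (hδ₂ : 0 < δ₂) :
    StableRelCT f Me Mo := by
  intro ε hε Δ hΔ
  obtain ⟨ε', hε', hε'min⟩ := exists_between (lt_min hε hδ₂)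
  obtain ⟨μ, ⟨hμ, hμε'⟩, ρ, hρ, hcross⟩ := exists_not_cross_shell hf hMiClosed (hMo.mono hMoSub)
    hMoCompact hMo hMoStable hMoAttr hε' (hε'min.trans_le (min_le_right ε δ₂))
  obtain ⟨δ, hδ, hMiδ⟩ := hMiStable ρ hρ Δ hΔ
  refine ⟨min δ μ, lt_min hδ hμ, fun T φ hφ hφMe hφMo hφΔ t ht htT => ?_⟩
  by_contra! hfar
  obtain ⟨s, t', hs, hst', ht't, hsμ, ht'ε, hshell⟩ := exists_crossing_of_continuousOn ht
    ((continuous_infDist_pt Mo).comp_continuousOn (hφ.continuousOn_Icc htT))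
    (hφMo.le.trans (min_le_right δ μ)) hμε' (hε'min.le.trans ((min_le_left ε δ₂).trans hfar))
  have ht'T : (t' : EReal) < T := (EReal.coe_le_coe_iff.2 ht't).trans_lt htT
  have hsMi : infDist (φ s) Mi < ρ := hMiδ T φ hφ hφMe
    ((infDist_le_infDist_of_subset hMoSub hMo).trans_lt (hφMo.trans_le (min_le_left δ μ)))
    hφΔ s hs ((EReal.coe_le_coe_iff.2 hst').trans_lt ht'T)
  exact (hcross T φ s t' hφ hs hst' ht'T hsMi hsμ.le hshell).ne ht'ε

theorem exists_attractiveRelCT_of_stableRelCT {Me : Set (EuclideanSpace ℝ (Fin d))} {δ₁ : ℝ}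
    (hf : Continuous f) (hMeInv : FwdInvariant f Me) (hMiClosed : IsClosed Mi)
    (hMiAttr : AttractiveRelCT f Me Mi δ₁) (hδ₁ : 0 < δ₁) (hMoSub : Mo ⊆ Mi)
    (hMoCompact : IsCompact Mo) (hMo : Mo.Nonempty) (hMoAttr : AttractiveRelCT f Mi Mo δ₂)
    (hδ₂ : 0 < δ₂) (hMoStable : StableRelCT f Me Mo) : ∃ δ > 0, AttractiveRelCT f Me Mo δ := by
  have hK := hMoCompact.isCompact_setOf_infDist_le hMo (δ₂ / 2)
  obtain ⟨R, hR, hKR⟩ := hK.isBounded.exists_pos_norm_lt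
  obtain ⟨δ, hδ, hstable⟩ := hMoStable (δ₂ / 2) (half_pos hδ₂) R hR
  refine ⟨min (min δ δ₁) (δ₂ / 2), by positivity, fun φ hφ hφMe hφMo => ?_⟩
  have hφK : ∀ t, 0 ≤ t → infDist (φ t) Mo ≤ δ₂ / 2 := fun t ht =>
    (hstable ⊤ φ hφ hφMe (hφMo.trans_le ((min_le_left _ _).trans (min_le_left _ _)))
      (hKR _ (hφMo.le.trans (min_le_right _ _))) t ht (EReal.coe_lt_top t)).le
  have hφMi := hMiAttr φ hφ hφMe ((infDist_le_infDist_of_subset hMoSub hMo).trans_lt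
    (hφMo.trans_le ((min_le_left _ _).trans (min_le_right _ _))))
  refine hMoStable.tendsto_infDist_of_forall_exists_lt hMeInv hφ hφMe
    (fun t ht => hKR _ (hφK t ht)) fun η hη => ?_
  by_contra! hfar
  obtain ⟨ρ, hρ, τ, hτ⟩ := exists_time_bound_in_shell hf hMiClosed (hMo.mono hMoSub) hMoCompact
    hMo hMoAttr hη (half_lt_self hδ₂)
  obtain ⟨s, hsρ, hs⟩ := ((hφMi.eventually (gt_mem_nhds hρ)).and (eventually_ge_atTop 0)).exists
  have hτs := hτ ⊤ φ s (s + τ + 1) hφ hs (EReal.coe_lt_top _) hsρ fun u hu =>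
    ⟨hfar u (hs.trans hu.1), hφK u (hs.trans hu.1)⟩
  linarith

end Solutions

theorem hierarchical_local_asymptotic_stability_ct_general {d : ℕ}
    (f : EuclideanSpace ℝ (Fin d) → EuclideanSpace ℝ (Fin d)) (hf : Continuous f)
    (Me Mi Mo : Set (EuclideanSpace ℝ (Fin d)))
    (hMeInv : FwdInvariant f Me)
    (hMiClosed : IsClosed Mi)
    (hMiStable : StableRelCT f Me Mi)
    (hMiAttr : ∃ δ₁ > (0 : ℝ), ∀ φ : ℝ → EuclideanSpace ℝ (Fin d), IsSolution f ⊤ φ →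
      φ 0 ∈ Me → infDist (φ 0) Mi < δ₁ →
        Tendsto (fun t : ℝ => infDist (φ t) Mi) atTop (𝓝 0))
    (hMoSub : Mo ⊆ Mi) (hMoCompact : IsCompact Mo)
    (hMoStable : StableRelCT f Mi Mo)
    (hMoAttr : ∃ δ₂ > (0 : ℝ), ∀ φ : ℝ → EuclideanSpace ℝ (Fin d), IsSolution f ⊤ φ →
      φ 0 ∈ Mi → infDist (φ 0) Mo < δ₂ →
        Tendsto (fun t : ℝ => infDist (φ t) Mo) atTop (𝓝 0)) :
    StableRelCT f Me Mo ∧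
      ∃ δ > (0 : ℝ), ∀ φ : ℝ → EuclideanSpace ℝ (Fin d), IsSolution f ⊤ φ →
        φ 0 ∈ Me → infDist (φ 0) Mo < δ →
          Tendsto (fun t : ℝ => infDist (φ t) Mo) atTop (𝓝 0) := by
  obtain ⟨δ₁, hδ₁, hMiAttr⟩ := hMiAttr
  obtain ⟨δ₂, hδ₂, hMoAttr⟩ := hMoAttr
  rcases Mo.eq_empty_or_nonempty with rfl | hMo
  · exact ⟨fun ε hε _ _ => ⟨1, one_pos, by simp [hε]⟩, 1, one_pos, by simp⟩
  have hstable := stableRelCT_of_stableRelCT_of_attractiveRelCT hf hMiClosed hMiStable hMoSub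
    hMoCompact hMo hMoStable hMoAttr hδ₂
  exact ⟨hstable, exists_attractiveRelCT_of_stableRelCT hf hMeInv hMiClosed hMiAttr hδ₁ hMoSub
    hMoCompact hMo hMoAttr hδ₂ hstable⟩

theorem hierarchical_local_asymptotic_stability_ct {d : ℕ}
    (f : EuclideanSpace ℝ (Fin d) → EuclideanSpace ℝ (Fin d)) (hf : Continuous f)
    (Me Mi Mo : Set (EuclideanSpace ℝ (Fin d)))
    (hMeClosed : IsClosed Me) (hMeInv : FwdInvariant f Me)
    (hMiSub : Mi ⊆ Me) (hMiClosed : IsClosed Mi)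
    (hMiStable : StableRelCT f Me Mi)
    (hMiAttr : ∃ δ₁ > (0 : ℝ), ∀ φ : ℝ → EuclideanSpace ℝ (Fin d), IsSolution f ⊤ φ →
      φ 0 ∈ Me → infDist (φ 0) Mi < δ₁ →
        Tendsto (fun t : ℝ => infDist (φ t) Mi) atTop (𝓝 0))
    (hMoSub : Mo ⊆ Mi) (hMoCompact : IsCompact Mo)
    (hMoStable : StableRelCT f Mi Mo)
    (hMoAttr : ∃ δ₂ > (0 : ℝ), ∀ φ : ℝ → EuclideanSpace ℝ (Fin d), IsSolution f ⊤ φ →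
      φ 0 ∈ Mi → infDist (φ 0) Mo < δ₂ →
        Tendsto (fun t : ℝ => infDist (φ t) Mo) atTop (𝓝 0)) :
    StableRelCT f Me Mo ∧
      ∃ δ > (0 : ℝ), ∀ φ : ℝ → EuclideanSpace ℝ (Fin d), IsSolution f ⊤ φ →
        φ 0 ∈ Me → infDist (φ 0) Mo < δ →
          Tendsto (fun t : ℝ => infDist (φ t) Mo) atTop (𝓝 0) :=
  hierarchical_local_asymptotic_stability_ct_general f hf Me Mi Mo hMeInv hMiClosed hMiStable
    hMiAttr hMoSub hMoCompact hMoStable hMoAttr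
end
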